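/- arXiv:1202.4597 — 4 statements merged into one kernel-verified Lean document; each statement's English description precedes it below -/
import Mathlib

section
/- Let a and b be integers with 0 < a < b, and let [a₀, a₁, …, aₙ] be the continued fraction expansion of b/a. Then the Sprague–Grundy value 𝒢_G(a,b) of the position {a,b} in Grossman's game equals the Sprague–Grundy value 𝒢_E(a,b) of the Euclid position (a,b), except in the case a₀ = a₁ = ⋯ = aₙ, in which case 𝒢_G(a,b) = 𝒢_E(a,b) − (−1)^{𝓘(a,b)}. -/
/-- The minimum excludant of a set of natural numbers: the least nonnegative
integer not belonging to the set. -/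
noncomputable def mex (S : Set ℕ) : ℕ := sInf {n : ℕ | n ∉ S}

/-- `cf a b` is the continued fraction expansion `[a₀, a₁, …, aₙ]` of `b / a`
(for `0 < a`), computed by the Euclidean algorithm; the convention `aₙ > 1`
whenever `n > 0` holds automatically. -/
def cf (a b : ℕ) : List ℕ :=
  if h : a = 0 then [] else (b / a) :: cf (b % a) a
termination_by a
decreasing_by exact Nat.mod_lt _ (Nat.pos_of_ne_zero h)

/-- `𝓘(a,b)`: the largest nonnegative integer `i` such that
`a₀ = a₁ = ⋯ = a_{i−1} ≤ a_i` in the continued fraction `[a₀, …, aₙ]` of `b / a`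
(for `i = 0` the condition is vacuous). -/
def Ifun (a b : ℕ) : ℕ :=
  Nat.findGreatest
    (fun i => i < (cf a b).length ∧ (∀ j < i, (cf a b).getD j 0 = (cf a b).getD 0 0) ∧
      (cf a b).getD 0 0 ≤ (cf a b).getD i 0)
    ((cf a b).length - 1)

/-- Moves in Euclid.  Positions are unordered pairs of nonnegative integers,
represented as sorted pairs `(p.1, p.2)` with `p.1 ≤ p.2`.  From a position with
both entries positive one subtracts a positive multiple of one entry from the
other without making the result negative; positions with a zero entry are
terminal. -/
def euclidMove (p q : ℕ × ℕ) : Prop :=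
  0 < p.1 ∧ p.1 ≤ p.2 ∧
    ∃ k : ℕ, 0 < k ∧ k * p.1 ≤ p.2 ∧
      q = (min p.1 (p.2 - k * p.1), max p.1 (p.2 - k * p.1))

/-- The Sprague–Grundy function of Euclid:
`𝒢_E(p) = mex { 𝒢_E(q) : q an option of p }`. -/
noncomputable def euclidGrundy (p : ℕ × ℕ) : ℕ :=
  mex {g : ℕ | ∃ q : ℕ × ℕ, ∃ _ : euclidMove p q, euclidGrundy q = g}
termination_by p.1 + p.2
decreasing_by
  rename_i hq
  obtain ⟨h1, h2, k, hk, hle, rfl⟩ := hq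
  have : p.1 ≤ k * p.1 := Nat.le_mul_of_pos_left p.1 hk
  simp only [Nat.min_def, Nat.max_def]
  split <;> omega

/-- Moves in Grossman's game.  Positions are unordered pairs of positive
integers, represented as sorted pairs; positions with equal entries are
terminal; from `{a, b}` with `a < b` one may move to `{a, b − k·a}` for any
positive integer `k` with `b − k·a ≥ 1`. -/
def grossmanMove (p q : ℕ × ℕ) : Prop :=
  0 < p.1 ∧ p.1 < p.2 ∧
    ∃ k : ℕ, 0 < k ∧ k * p.1 < p.2 ∧
      q = (min p.1 (p.2 - k * p.1), max p.1 (p.2 - k * p.1))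

/-- The Sprague–Grundy function of Grossman's game:
`𝒢_G(p) = mex { 𝒢_G(q) : q an option of p }`. -/
noncomputable def grossmanGrundy (p : ℕ × ℕ) : ℕ :=
  mex {g : ℕ | ∃ q : ℕ × ℕ, ∃ _ : grossmanMove p q, grossmanGrundy q = g}
termination_by p.1 + p.2
decreasing_by
  rename_i hq
  obtain ⟨h1, h2, k, hk, hle, rfl⟩ := hq
  have : p.1 ≤ k * p.1 := Nat.le_mul_of_pos_left p.1 hk
  simp only [Nat.min_def, Nat.max_def]
  split <;> omega

-- auxiliary lemmas
lemma mex_eq_of {S : Set ℕ} {m : ℕ} (h1 : ∀ k < m, k ∈ S) (h2 : m ∉ S) : mex S = m := by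
  unfold mex
  have hm : m ∈ {n : ℕ | n ∉ S} := h2
  refine le_antisymm (Nat.sInf_le hm) ?_
  by_contra h
  push_neg at h
  exact (Nat.sInf_mem (⟨m, hm⟩ : Set.Nonempty {n : ℕ | n ∉ S})) (h1 _ h)

lemma euclidGrundy_def (p : ℕ × ℕ) :
    euclidGrundy p = mex {g : ℕ | ∃ q : ℕ × ℕ, ∃ _ : euclidMove p q, euclidGrundy q = g} := by
  conv_lhs => rw [euclidGrundy]

lemma grossmanGrundy_def (p : ℕ × ℕ) :
    grossmanGrundy p = mex {g : ℕ | ∃ q : ℕ × ℕ, ∃ _ : grossmanMove p q, grossmanGrundy q = g} := by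
  conv_lhs => rw [grossmanGrundy]

lemma euclid_zero (x : ℕ) : euclidGrundy (0, x) = 0 := by
  rw [euclidGrundy_def]
  apply mex_eq_of
  · intro k hk; exact absurd hk (Nat.not_lt_zero k)
  · rintro ⟨q, ⟨h1, -⟩, -⟩
    exact absurd h1 (by simp)

lemma grossman_diag (a : ℕ) : grossmanGrundy (a, a) = 0 := by
  rw [grossmanGrundy_def]
  apply mex_eq_of
  · intro k hk; exact absurd hk (Nat.not_lt_zero k)
  · rintro ⟨q, ⟨h1, h2, -⟩, -⟩
    simp at h2

lemma euclid_diag (a : ℕ) (ha : 0 < a) : euclidGrundy (a, a) = 1 := by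
  rw [euclidGrundy_def]
  apply mex_eq_of
  · intro k hk
    have hk0 : k = 0 := by omega
    subst hk0
    exact ⟨(0, a), ⟨ha, le_refl _, 1, one_pos, by simpa, by simp⟩, by rw [euclid_zero]⟩
  · rintro ⟨q, ⟨h1, h2, k, hk, hle, rfl⟩, hval⟩
    simp only at hle hval ⊢
    have hk1 : k = 1 := by
      rcases Nat.lt_or_ge k 2 with h | h
      · omega
      · exfalso; have : 2 * a ≤ k * a := Nat.mul_le_mul_right a h; omega
    subst hk1
    rw [one_mul, Nat.sub_self] at hval
    simp only [Nat.min_zero, Nat.max_zero] at hval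
    rw [euclid_zero] at hval
    omega

lemma cf_eq {a : ℕ} (b : ℕ) (ha : 0 < a) : cf a b = (b / a) :: cf (b % a) a := by
  rw [cf]; simp [Nat.pos_iff_ne_zero.mp ha]

def AE (a b : ℕ) : Prop := ∀ x ∈ cf a b, x = b / a

lemma AE_of_dvd {a b : ℕ} (ha : 0 < a) (hr : b % a = 0) : AE a b := by
  intro x hx
  rw [cf_eq b ha, hr, cf] at hx
  simp at hx; simp [hx]

lemma AE_iff {a b : ℕ} (ha : 0 < a) (hr : 0 < b % a) :
    AE a b ↔ (a / (b % a) = b / a ∧ AE (b % a) a) := by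
  unfold AE
  constructor
  · intro h
    have hmem : a / (b % a) ∈ cf a b := by
      rw [cf_eq b ha, cf_eq a hr]; simp
    have h1 : a / (b % a) = b / a := h _ hmem
    refine ⟨h1, fun x hx => ?_⟩
    have hx2 : x ∈ cf a b := by rw [cf_eq b ha]; exact List.mem_cons_of_mem _ hx
    rw [h _ hx2, h1]
  · rintro ⟨h1, h2⟩
    intro x hx
    rw [cf_eq b ha] at hx
    rcases List.mem_cons.mp hx with rfl | hx
    · rfl
    · rw [h2 x hx, h1]

lemma ne_sq {a r : ℕ} (hr : 0 < r) (hra : r < a) : (a % r) * a ≠ r * r := by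
  intro hcontra
  set d := Nat.gcd r a with hd
  have hd0 : 0 < d := Nat.gcd_pos_of_pos_left a hr
  set u := r / d with hudef
  set w := a / d with hwdef
  have hu : u * d = r := Nat.div_mul_cancel (Nat.gcd_dvd_left r a)
  have hw : w * d = a := Nat.div_mul_cancel (Nat.gcd_dvd_right r a)
  have hcop : Nat.Coprime u w := Nat.coprime_div_gcd_div_gcd hd0
  set a1 := a / r with ha1def
  have hdiv : a1 * r ≤ a := by rw [ha1def]; exact Nat.div_mul_le_self a r
  have h0 : a1 * r + a % r = a := by rw [ha1def, mul_comm]; exact Nat.div_add_mod a r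
  have hmod : a % r = a - a1 * r := by omega
  have key : a * a = a1 * r * a + r * r := by
    have h5 : (a - a1 * r) * a = r * r := by rw [← hmod]; exact hcontra
    rw [Nat.sub_mul] at h5
    have h6 : a1 * r * a ≤ a * a := Nat.mul_le_mul_right a hdiv
    omega
  have key2 : w * w = a1 * u * w + u * u := by
    refine Nat.eq_of_mul_eq_mul_left (show 0 < d * d by positivity) ?_
    have : (w * d) * (w * d) = a1 * (u * d) * (w * d) + (u * d) * (u * d) := by
      rw [hu, hw]; exact key
    nlinarith [this]
  have hwdvd : w ∣ u * u := by
    have h6 : w ∣ w * w := dvd_mul_right w w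
    rw [key2] at h6
    exact (Nat.dvd_add_right ⟨a1 * u, by ring⟩).mp h6
  have hw1 : w = 1 := Nat.Coprime.eq_one_of_dvd (Nat.Coprime.mul_right hcop.symm hcop.symm) hwdvd
  have hu1 : 0 < u := by
    rcases Nat.eq_zero_or_pos u with h0 | h0
    · rw [h0, zero_mul] at hu; omega
    · exact h0
  have : a ≤ r := by
    rw [← hu, ← hw, hw1, one_mul]
    exact Nat.le_mul_of_pos_left d hu1
  omega

lemma S_iff_aux {a r a1 r1 j : ℕ} (hr : 0 < r) (hra : r < a)
    (hmod : a1 * r + r1 = a) (hr1r : r1 < r) (hne : r1 * a ≠ r * r) :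
    (a * a ≤ r * (j * a + r)) ↔ ((if r * r ≤ r1 * a then a1 + 1 else a1) ≤ j) := by
  have ha1pos : 1 ≤ a1 := by nlinarith
  have hexp : a * a = a1 * (r * a) + r1 * a := by nlinarith [hmod]
  by_cases hS : r * r ≤ r1 * a
  · have hSlt : r * r < r1 * a := lt_of_le_of_ne hS (fun h => hne h.symm)
    rw [if_pos hS]
    constructor
    · intro h
      by_contra hj
      push_neg at hj
      have hj' : j ≤ a1 := by omega
      have h1 : j * (r * a) ≤ a1 * (r * a) := Nat.mul_le_mul_right _ hj'
      nlinarith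
    · intro hj
      have h1 : (a1 + 1) * (r * a) ≤ j * (r * a) := Nat.mul_le_mul_right _ hj
      have h2 : r1 * a ≤ r * a := Nat.mul_le_mul_right _ (le_of_lt hr1r)
      nlinarith
  · push_neg at hS
    rw [if_neg (by omega)]
    constructor
    · intro h
      by_contra hj
      push_neg at hj
      have hj' : j + 1 ≤ a1 := by omega
      have h1 : (j + 1) * (r * a) ≤ a1 * (r * a) := Nat.mul_le_mul_right _ hj'
      have h2 : r * r < r * a := by nlinarith
      nlinarith
    · intro hj
      have h1 : a1 * (r * a) ≤ j * (r * a) := Nat.mul_le_mul_right _ hj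
      nlinarith

lemma S_iff {a r : ℕ} (j : ℕ) (hr : 0 < r) (hra : r < a) :
    (a * a ≤ r * (j * a + r)) ↔ ((if r * r ≤ (a % r) * a then a / r + 1 else a / r) ≤ j) :=
  S_iff_aux hr hra (by rw [mul_comm]; exact Nat.div_add_mod a r) (Nat.mod_lt a hr) (ne_sq hr hra)

open Classical in
lemma main_lemma : ∀ N a b : ℕ, a + b ≤ N → 0 < a → a < b →
    grossmanGrundy (a, b) = b / a - 1 + (if a * a ≤ b % a * b then 1 else 0) ∧
    euclidGrundy (a, b) = b / a - 1 + (if (a * a ≤ b % a * b) ↔ ¬ AE a b then 1 else 0) ∧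
    (AE a b → ((a * a ≤ b % a * b) ↔ Odd ((cf a b).length - 1))) := by
  intro N
  induction N with
  | zero => intro a b h ha hab; omega
  | succ N IH =>
    intro a b hN ha hab
    set q := b / a with hqdef
    set r := b % a with hrdef
    have hmod : q * a + r = b := by rw [hqdef, hrdef, mul_comm]; exact Nat.div_add_mod b a
    have hra : r < a := by rw [hrdef]; exact Nat.mod_lt b ha
    have hq1 : 1 ≤ q := by rw [hqdef]; exact (Nat.one_le_div_iff ha).mpr (le_of_lt hab)
    have hbN : b ≤ N := by omega
    have hsub : ∀ k, k ≤ q → b - k * a = (q - k) * a + r := by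
      intro k hk
      have h1 : (q - k) * a + k * a = q * a := by
        rw [← Nat.add_mul]; congr 1; omega
      omega
    have hka_le : ∀ k, (k * a ≤ b ↔ k ≤ q) := by
      intro k
      constructor
      · intro h
        by_contra hc
        push_neg at hc
        have h2 : (q + 1) * a ≤ k * a := Nat.mul_le_mul_right a hc
        have h3 : (q + 1) * a = q * a + 1 * a := Nat.add_mul q 1 a
        have h4 : 1 * a = a := one_mul a
        omega
      · intro h
        have h2 : k * a ≤ q * a := Nat.mul_le_mul_right a h
        omega
    rcases Nat.eq_zero_or_pos r with hr0 | hrpos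
    · -- CASE r = 0
      have hq2 : 2 ≤ q := by
        by_contra h
        have h1 : q = 1 := by omega
        rw [h1, one_mul] at hmod; omega
      have hka_lt : ∀ k, (k * a < b ↔ k ≤ q - 1) := by
        intro k
        constructor
        · intro h
          have h2 := (hka_le k).mp (le_of_lt h)
          rcases Nat.lt_or_ge k q with h3 | h3
          · omega
          · exfalso; have hk2 : k = q := by omega
            rw [hk2] at h; omega
        · intro h
          have h2 : k * a ≤ (q - 1) * a := Nat.mul_le_mul_right a h
          have h3 : (q - 1) * a + 1 * a = q * a := by rw [← Nat.add_mul]; congr 1; omega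
          have h4 : 1 * a = a := one_mul a
          omega
      have hAE : AE a b := AE_of_dvd ha (by omega)
      have hcfab : cf a b = [q] := by
        rw [cf_eq b ha, ← hqdef, ← hrdef, hr0, cf]; simp
      have hSneg : ¬ (a * a ≤ r * b) := by
        rw [hr0, zero_mul]; nlinarith
      -- values of multiples: grossman
      have hGmul : ∀ j, 1 ≤ j → j ≤ q - 1 → grossmanGrundy (a, j * a) = j - 1 := by
        intro j hj1 hj2
        rcases Nat.eq_or_lt_of_le hj1 with h1 | h1
        · rw [← h1, one_mul]; exact grossman_diag a
        · have hlt : a < j * a := by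
            have := Nat.mul_le_mul_right a (show 2 ≤ j by omega)
            have h4 : 2 * a = a + a := by ring
            omega
          have hsum : a + j * a ≤ N := by
            have h2 : j * a ≤ (q - 1) * a := Nat.mul_le_mul_right a hj2
            have h3 : (q - 1) * a + 1 * a = q * a := by rw [← Nat.add_mul]; congr 1; omega
            have h4 : 1 * a = a := one_mul a
            omega
          have hdiv : j * a / a = j := Nat.mul_div_cancel j ha
          have hmodj : j * a % a = 0 := Nat.mul_mod_left j a
          have := (IH a (j * a) hsum ha hlt).1
          rw [hdiv, hmodj, zero_mul, if_neg (by nlinarith)] at this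
          omega
      have hEmul : ∀ j, 2 ≤ j → j ≤ q - 1 → euclidGrundy (a, j * a) = j := by
        intro j hj1 hj2
        have hlt : a < j * a := by
          have := Nat.mul_le_mul_right a hj1
          have h4 : 2 * a = a + a := by ring
          omega
        have hsum : a + j * a ≤ N := by
          have h2 : j * a ≤ (q - 1) * a := Nat.mul_le_mul_right a hj2
          have h3 : (q - 1) * a + 1 * a = q * a := by rw [← Nat.add_mul]; congr 1; omega
          have h4 : 1 * a = a := one_mul a
          omega
        have hdiv : j * a / a = j := Nat.mul_div_cancel j ha
        have hmodj : j * a % a = 0 := Nat.mul_mod_left j a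
        have hAEj : AE a (j * a) := AE_of_dvd ha hmodj
        have := (IH a (j * a) hsum ha hlt).2.1
        rw [hdiv, hmodj, zero_mul] at this
        rw [if_pos (iff_of_false (by nlinarith) (by simp [hAEj]))] at this
        omega
      refine ⟨?_, ?_, ?_⟩
      · -- grossman, r = 0
        rw [if_neg hSneg, grossmanGrundy_def]
        apply mex_eq_of
        · intro v hv
          refine ⟨(min a (b - (q - 1 - v) * a), max a (b - (q - 1 - v) * a)),
            ⟨ha, hab, q - 1 - v, by omega, (hka_lt _).mpr (by omega), rfl⟩, ?_⟩
          rw [hsub _ (by omega)]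
          have hj : q - (q - 1 - v) = v + 1 := by omega
          rw [hj, hr0, add_zero]
          have hle : a ≤ (v + 1) * a := Nat.le_mul_of_pos_left a (by omega)
          rw [min_eq_left hle, max_eq_right hle, hGmul (v + 1) (by omega) (by omega)]
          omega
        · rintro ⟨p, ⟨-, -, k, hk, hka, rfl⟩, hval⟩
          have hkq : k ≤ q - 1 := (hka_lt k).mp hka
          rw [hsub _ (by omega), hr0, add_zero] at hval
          have hle : a ≤ (q - k) * a := Nat.le_mul_of_pos_left a (by omega)
          rw [min_eq_left hle, max_eq_right hle, hGmul (q - k) (by omega) (by omega)] at hval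
          omega
      · -- euclid, r = 0
        rw [if_pos (iff_of_false hSneg (by simp [hAE]))]
        rw [euclidGrundy_def]
        have hm : q - 1 + 1 = q := by omega
        rw [hm]
        apply mex_eq_of
        · intro v hv
          rcases Nat.lt_or_ge v 2 with hv2 | hv2
          · rcases Nat.eq_zero_or_pos v with hv0 | hv1
            · -- v = 0 : k = q
              refine ⟨(min a (b - q * a), max a (b - q * a)),
                ⟨ha, le_of_lt hab, q, by omega, (hka_le q).mpr le_rfl, rfl⟩, ?_⟩
              have hbq : b - q * a = 0 := by omega
              rw [hbq]
              simp only [Nat.min_zero, Nat.max_zero]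
              rw [euclid_zero]; omega
            · -- v = 1 : k = q - 1
              refine ⟨(min a (b - (q - 1) * a), max a (b - (q - 1) * a)),
                ⟨ha, le_of_lt hab, q - 1, by omega, (hka_le _).mpr (by omega), rfl⟩, ?_⟩
              rw [hsub _ (by omega), hr0, add_zero]
              have hj : q - (q - 1) = 1 := by omega
              rw [hj, one_mul]
              simp only [Nat.min_self, Nat.max_self]
              rw [euclid_diag a ha]; omega
          · -- v ≥ 2 : k = q - v
            refine ⟨(min a (b - (q - v) * a), max a (b - (q - v) * a)),
              ⟨ha, le_of_lt hab, q - v, by omega, (hka_le _).mpr (by omega), rfl⟩, ?_⟩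
            rw [hsub _ (by omega), hr0, add_zero]
            have hj : q - (q - v) = v := by omega
            rw [hj]
            have hle : a ≤ v * a := Nat.le_mul_of_pos_left a (by omega)
            rw [min_eq_left hle, max_eq_right hle, hEmul v hv2 (by omega)]
        · rintro ⟨p, ⟨-, -, k, hk, hka, rfl⟩, hval⟩
          have hkq : k ≤ q := (hka_le k).mp hka
          rcases Nat.eq_or_lt_of_le hkq with hkq1 | hkq1
          · have hkk : k * a = q * a := by rw [hkq1]
            have hbq : b - k * a = 0 := by omega
            rw [hbq] at hval
            simp only [Nat.min_zero, Nat.max_zero] at hval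
            rw [euclid_zero] at hval; omega
          · rw [hsub _ (by omega), hr0, add_zero] at hval
            rcases Nat.eq_or_lt_of_le (show q - k ≥ 1 by omega) with hj1 | hj1
            · rw [← hj1, one_mul] at hval
              simp only [Nat.min_self, Nat.max_self] at hval
              rw [euclid_diag a ha] at hval; omega
            · have hle : a ≤ (q - k) * a := Nat.le_mul_of_pos_left a (by omega)
              rw [min_eq_left hle, max_eq_right hle, hEmul (q - k) (by omega) (by omega)] at hval
              omega
      · -- parity claim, r = 0
        intro _
        rw [hr0, zero_mul, hcfab]
        simp only [List.length_cons, List.length_nil]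
        constructor
        · intro h; exfalso; nlinarith
        · intro h; exact absurd h (by decide)
    · -- CASE r > 0
      set a1 := a / r with ha1def
      set T := AE r a with hTdef
      set gp := if r * r ≤ a % r * a then a1 else a1 - 1 with hgpdef
      have ha11 : 1 ≤ a1 := by rw [ha1def]; exact (Nat.one_le_div_iff hrpos).mpr (le_of_lt hra)
      have hka_lt : ∀ k, (k * a < b ↔ k ≤ q) := by
        intro k
        constructor
        · intro h; exact (hka_le k).mp (le_of_lt h)
        · intro h
          have h2 : k * a ≤ q * a := Nat.mul_le_mul_right a h
          omega
      have hSiff : ∀ j, (a * a ≤ r * (j * a + r)) ↔ gp + 1 ≤ j := by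
        intro j
        have h := S_iff j hrpos hra
        rw [← ha1def] at h
        rw [h, hgpdef]
        by_cases hS' : r * r ≤ a % r * a
        · rw [if_pos hS', if_pos hS']
        · rw [if_neg hS', if_neg hS']; omega
      have IHra := IH r a (by omega) hrpos hra
      have hG' : grossmanGrundy (r, a) = gp := by
        have h := IHra.1
        rw [← ha1def] at h
        rw [h, hgpdef]
        by_cases hS' : r * r ≤ a % r * a
        · rw [if_pos hS', if_pos hS']; omega
        · rw [if_neg hS', if_neg hS']; omega
      have hE'T : T → euclidGrundy (r, a) = a1 - 1 + (if r * r ≤ a % r * a then 0 else 1) := by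
        intro hT
        have h := IHra.2.1
        rw [← ha1def, ← hTdef] at h
        by_cases hS' : r * r ≤ a % r * a
        · rw [if_neg (fun hiff => (hiff.mp hS') hT)] at h
          rw [if_pos hS']; omega
        · rw [if_pos (iff_of_false hS' (not_not_intro hT))] at h
          rw [if_neg hS']; omega
      have hE'F : ¬ T → euclidGrundy (r, a) = gp := by
        intro hnT
        have h := IHra.2.1
        rw [← ha1def, ← hTdef] at h
        rw [hgpdef]
        by_cases hS' : r * r ≤ a % r * a
        · rw [if_pos (iff_of_true hS' hnT)] at h
          rw [if_pos hS']; omega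
        · rw [if_neg (fun hiff => hS' (hiff.mpr hnT))] at h
          rw [if_neg hS']; omega
      have hIIIra : T → ((r * r ≤ a % r * a) ↔ Odd ((cf r a).length - 1)) := by
        intro hT
        have h := IHra.2.2 hT
        exact h
      have hAEb : AE a b ↔ (a1 = q ∧ T) := by
        have h := AE_iff ha (show 0 < b % a by omega)
        rw [← hrdef, ← hqdef, ← ha1def, ← hTdef] at h
        exact h
      have hSq : (a * a ≤ r * b) ↔ gp + 1 ≤ q := by
        have h := hSiff q
        rw [hmod] at h
        exact h
      have hPmid : ∀ k, 1 ≤ k → k ≤ q - 1 →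
          (min a (b - k * a), max a (b - k * a)) = (a, (q - k) * a + r) := by
        intro k h1 h2
        rw [hsub k (by omega)]
        have h3 : 1 * a ≤ (q - k) * a := Nat.mul_le_mul_right a (by omega)
        have h4 : 1 * a = a := one_mul a
        have hle : a ≤ (q - k) * a + r := by omega
        rw [min_eq_left hle, max_eq_right hle]
      have hPq : (min a (b - q * a), max a (b - q * a)) = (r, a) := by
        have hbq : b - q * a = r := by omega
        rw [hbq, min_eq_right (le_of_lt hra), max_eq_left (le_of_lt hra)]
      have hdivj : ∀ j, (j * a + r) / a = j := by
        intro j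
        rw [add_comm, Nat.add_mul_div_right r j ha, Nat.div_eq_of_lt hra, Nat.zero_add]
      have hmodj : ∀ j, (j * a + r) % a = r := by
        intro j
        rw [add_comm, Nat.add_mul_mod_self_right, Nat.mod_eq_of_lt hra]
      have hjfacts : ∀ j, 1 ≤ j → j ≤ q - 1 → (a < j * a + r ∧ a + (j * a + r) ≤ N) := by
        intro j h1 h2
        have h3 : 1 * a ≤ j * a := Nat.mul_le_mul_right a h1
        have h4 : 1 * a = a := one_mul a
        have h5 : j * a ≤ (q - 1) * a := Nat.mul_le_mul_right a h2
        have h6 : (q - 1) * a + 1 * a = q * a := by rw [← Nat.add_mul]; congr 1; omega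
        omega
      have hGmid : ∀ j, 1 ≤ j → j ≤ q - 1 →
          grossmanGrundy (a, j * a + r) = j - 1 + (if gp + 1 ≤ j then 1 else 0) := by
        intro j h1 h2
        obtain ⟨hlt, hsum⟩ := hjfacts j h1 h2
        have h := (IH a (j * a + r) hsum ha hlt).1
        rw [hdivj j, hmodj j] at h
        rw [h]
        congr 1
        exact if_congr (hSiff j) rfl rfl
      have hEmid : ∀ j, 1 ≤ j → j ≤ q - 1 →
          euclidGrundy (a, j * a + r) = j - 1 +
            (if ((gp + 1 ≤ j) ↔ ¬(a1 = j ∧ T)) then 1 else 0) := by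
        intro j h1 h2
        obtain ⟨hlt, hsum⟩ := hjfacts j h1 h2
        have hAEj : AE a (j * a + r) ↔ (a1 = j ∧ T) := by
          have h := AE_iff ha (show 0 < (j * a + r) % a by rw [hmodj j]; omega)
          rw [hmodj j, hdivj j, ← ha1def, ← hTdef] at h
          exact h
        have h := (IH a (j * a + r) hsum ha hlt).2.1
        rw [hdivj j, hmodj j] at h
        rw [h]
        congr 1
        exact if_congr (iff_congr (hSiff j) (not_congr hAEj)) rfl rfl
      have hEmid1 : ∀ j, 1 ≤ j → j ≤ q - 1 → ¬(a1 = j ∧ T) →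
          euclidGrundy (a, j * a + r) = j - 1 + (if gp + 1 ≤ j then 1 else 0) := by
        intro j h1 h2 hn
        rw [hEmid j h1 h2]
        congr 1
        exact if_congr ⟨fun hC => hC.mpr hn, fun hg => iff_of_true hg hn⟩ rfl rfl
      have hEmid2 : ∀ j, 1 ≤ j → j ≤ q - 1 → a1 = j → T →
          euclidGrundy (a, j * a + r) = j - 1 + (if gp + 1 ≤ j then 0 else 1) := by
        intro j h1 h2 hj hT
        rw [hEmid j h1 h2]
        by_cases hg : gp + 1 ≤ j
        · rw [if_neg (fun hC => (hC.mp hg) ⟨hj, hT⟩), if_pos hg]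
        · rw [if_pos (iff_of_false hg (not_not_intro ⟨hj, hT⟩)), if_neg hg]
      have hmemG : ∀ k, 1 ≤ k → k ≤ q → ∀ g : ℕ,
          grossmanGrundy (min a (b - k * a), max a (b - k * a)) = g →
          g ∈ {g : ℕ | ∃ p : ℕ × ℕ, ∃ _ : grossmanMove (a, b) p, grossmanGrundy p = g} :=
        fun k h1 h2 g hg => ⟨_, ⟨ha, hab, k, h1, (hka_lt k).mpr h2, rfl⟩, hg⟩
      have hmemE : ∀ k, 1 ≤ k → k ≤ q → ∀ g : ℕ,
          euclidGrundy (min a (b - k * a), max a (b - k * a)) = g →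
          g ∈ {g : ℕ | ∃ p : ℕ × ℕ, ∃ _ : euclidMove (a, b) p, euclidGrundy p = g} :=
        fun k h1 h2 g hg => ⟨_, ⟨ha, le_of_lt hab, k, h1, (hka_le k).mpr h2, rfl⟩, hg⟩
      refine ⟨?_, ?_, ?_⟩
      · -- GROSSMAN, r > 0
        rw [grossmanGrundy_def]
        by_cases hgp : gp + 1 ≤ q
        · rw [if_pos (hSq.mpr hgp), show q - 1 + 1 = q by omega]
          apply mex_eq_of
          · intro v hv
            rcases Nat.lt_trichotomy v gp with hvg | hvg | hvg
            · apply hmemG (q - v - 1) (by omega) (by omega)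
              rw [hPmid _ (by omega) (by omega), show q - (q - v - 1) = v + 1 by omega,
                hGmid (v + 1) (by omega) (by omega), if_neg (by omega)]
              omega
            · apply hmemG q (by omega) le_rfl
              rw [hPq, hG']; omega
            · apply hmemG (q - v) (by omega) (by omega)
              rw [hPmid _ (by omega) (by omega), show q - (q - v) = v by omega,
                hGmid v (by omega) (by omega), if_pos (by omega)]
              omega
          · rintro ⟨p, ⟨-, -, k, hk, hka, rfl⟩, hval⟩
            have hkq : k ≤ q := (hka_lt k).mp hka
            rcases Nat.eq_or_lt_of_le hkq with hkq1 | hkq1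
            · rw [hkq1, hPq, hG'] at hval; omega
            · rw [hPmid k (by omega) (by omega), hGmid (q - k) (by omega) (by omega)] at hval
              by_cases hind : gp + 1 ≤ q - k
              · rw [if_pos hind] at hval; omega
              · rw [if_neg hind] at hval; omega
        · rw [if_neg (fun hS => hgp (hSq.mp hS)), Nat.add_zero]
          apply mex_eq_of
          · intro v hv
            apply hmemG (q - v - 1) (by omega) (by omega)
            rw [hPmid _ (by omega) (by omega), show q - (q - v - 1) = v + 1 by omega,
              hGmid (v + 1) (by omega) (by omega), if_neg (by omega)]
            omega
          · rintro ⟨p, ⟨-, -, k, hk, hka, rfl⟩, hval⟩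
            have hkq : k ≤ q := (hka_lt k).mp hka
            rcases Nat.eq_or_lt_of_le hkq with hkq1 | hkq1
            · rw [hkq1, hPq, hG'] at hval; omega
            · rw [hPmid k (by omega) (by omega), hGmid (q - k) (by omega) (by omega),
                if_neg (by omega)] at hval
              omega
      · -- EUCLID, r > 0
        rw [euclidGrundy_def]
        by_cases hT : T
        · by_cases ha1q : a1 = q
          · -- case III : AE a b holds
            have hAE : AE a b := hAEb.mpr ⟨ha1q, hT⟩
            by_cases hS' : r * r ≤ a % r * a
            · -- III.alpha : gp = q, S false, m = q
              have hgpq : gp = q := by rw [hgpdef, if_pos hS']; omega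
              have hSf : ¬(a * a ≤ r * b) := fun h => by have := hSq.mp h; omega
              rw [if_pos (iff_of_false hSf (not_not_intro hAE)), show q - 1 + 1 = q by omega]
              apply mex_eq_of
              · intro v hv
                rcases Nat.eq_or_lt_of_le (show v ≤ q - 1 by omega) with hv1 | hv1
                · apply hmemE q (by omega) le_rfl
                  rw [hPq, hE'T hT, if_pos hS']; omega
                · apply hmemE (q - v - 1) (by omega) (by omega)
                  rw [hPmid _ (by omega) (by omega), show q - (q - v - 1) = v + 1 by omega,
                    hEmid1 (v + 1) (by omega) (by omega) (fun hc => by omega),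
                    if_neg (by omega)]
                  omega
              · rintro ⟨p, ⟨-, -, k, hk, hka, rfl⟩, hval⟩
                have hkq : k ≤ q := (hka_le k).mp hka
                rcases Nat.eq_or_lt_of_le hkq with hkq1 | hkq1
                · rw [hkq1, hPq, hE'T hT, if_pos hS'] at hval; omega
                · rw [hPmid k (by omega) (by omega),
                    hEmid1 (q - k) (by omega) (by omega) (fun hc => by omega),
                    if_neg (by omega)] at hval
                  omega
            · -- III.beta : gp = q - 1, S true, m = q - 1
              have hgpq : gp = q - 1 := by rw [hgpdef, if_neg hS']; omega
              have hSt : a * a ≤ r * b := hSq.mpr (by omega)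
              rw [if_neg (fun hC => (hC.mp hSt) hAE), Nat.add_zero]
              apply mex_eq_of
              · intro v hv
                apply hmemE (q - v - 1) (by omega) (by omega)
                rw [hPmid _ (by omega) (by omega), show q - (q - v - 1) = v + 1 by omega,
                  hEmid1 (v + 1) (by omega) (by omega) (fun hc => by omega),
                  if_neg (by omega)]
                omega
              · rintro ⟨p, ⟨-, -, k, hk, hka, rfl⟩, hval⟩
                have hkq : k ≤ q := (hka_le k).mp hka
                rcases Nat.eq_or_lt_of_le hkq with hkq1 | hkq1
                · rw [hkq1, hPq, hE'T hT, if_neg hS'] at hval; omega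
                · rw [hPmid k (by omega) (by omega),
                    hEmid1 (q - k) (by omega) (by omega) (fun hc => by omega),
                    if_neg (by omega)] at hval
                  omega
          · -- a1 ≠ q, T holds
            have hAEf : ¬ AE a b := fun h => ha1q (hAEb.mp h).1
            rcases Nat.lt_or_ge q a1 with ha1gt | ha1le
            · -- case II : a1 > q, S false, m = q - 1
              have hgpge : q ≤ gp := by rw [hgpdef]; split <;> omega
              have hSf : ¬(a * a ≤ r * b) := fun h => by have := hSq.mp h; omega
              rw [if_neg (fun hC => hSf (hC.mpr hAEf)), Nat.add_zero]
              apply mex_eq_of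
              · intro v hv
                apply hmemE (q - v - 1) (by omega) (by omega)
                rw [hPmid _ (by omega) (by omega), show q - (q - v - 1) = v + 1 by omega,
                  hEmid1 (v + 1) (by omega) (by omega) (fun hc => by omega),
                  if_neg (by omega)]
                omega
              · rintro ⟨p, ⟨-, -, k, hk, hka, rfl⟩, hval⟩
                have hkq : k ≤ q := (hka_le k).mp hka
                rcases Nat.eq_or_lt_of_le hkq with hkq1 | hkq1
                · rw [hkq1, hPq, hE'T hT] at hval
                  by_cases hS' : r * r ≤ a % r * a
                  · rw [if_pos hS'] at hval; omega
                  · rw [if_neg hS'] at hval; omega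
                · rw [hPmid k (by omega) (by omega),
                    hEmid1 (q - k) (by omega) (by omega) (fun hc => by omega),
                    if_neg (by omega)] at hval
                  omega
            · -- case IV : a1 < q, S true, m = q
              have ha1lt : a1 < q := by omega
              have hSt : a * a ≤ r * b := hSq.mpr (by rw [hgpdef]; split <;> omega)
              rw [if_pos (iff_of_true hSt hAEf), show q - 1 + 1 = q by omega]
              by_cases hS' : r * r ≤ a % r * a
              · -- IV.alpha : gp = a1, e' = a1 - 1
                have hgpa : gp = a1 := by rw [hgpdef, if_pos hS']
                apply mex_eq_of
                · intro v hv
                  rcases Nat.lt_trichotomy v a1 with hva | hva | hva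
                  · rcases Nat.eq_or_lt_of_le (show v ≤ a1 - 1 by omega) with hv1 | hv1
                    · apply hmemE q (by omega) le_rfl
                      rw [hPq, hE'T hT, if_pos hS']; omega
                    · apply hmemE (q - v - 1) (by omega) (by omega)
                      rw [hPmid _ (by omega) (by omega), show q - (q - v - 1) = v + 1 by omega,
                        hEmid1 (v + 1) (by omega) (by omega) (fun hc => by omega),
                        if_neg (by omega)]
                      omega
                  · apply hmemE (q - a1) (by omega) (by omega)
                    rw [hPmid _ (by omega) (by omega), show q - (q - a1) = a1 by omega,
                      hEmid2 a1 (by omega) (by omega) rfl hT, if_neg (by omega)]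
                    omega
                  · apply hmemE (q - v) (by omega) (by omega)
                    rw [hPmid _ (by omega) (by omega), show q - (q - v) = v by omega,
                      hEmid1 v (by omega) (by omega) (fun hc => by omega),
                      if_pos (by omega)]
                    omega
                · rintro ⟨p, ⟨-, -, k, hk, hka, rfl⟩, hval⟩
                  have hkq : k ≤ q := (hka_le k).mp hka
                  rcases Nat.eq_or_lt_of_le hkq with hkq1 | hkq1
                  · rw [hkq1, hPq, hE'T hT, if_pos hS'] at hval; omega
                  · rw [hPmid k (by omega) (by omega), hEmid (q - k) (by omega) (by omega)] at hval
                    by_cases hC : ((gp + 1 ≤ q - k) ↔ ¬(a1 = q - k ∧ T))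
                    · rw [if_pos hC] at hval; omega
                    · rw [if_neg hC] at hval; omega
              · -- IV.beta : gp = a1 - 1, e' = a1
                have hgpa : gp = a1 - 1 := by rw [hgpdef, if_neg hS']
                apply mex_eq_of
                · intro v hv
                  rcases Nat.lt_trichotomy v a1 with hva | hva | hva
                  · rcases Nat.eq_or_lt_of_le (show v ≤ a1 - 1 by omega) with hv1 | hv1
                    · apply hmemE (q - a1) (by omega) (by omega)
                      rw [hPmid _ (by omega) (by omega), show q - (q - a1) = a1 by omega,
                        hEmid2 a1 (by omega) (by omega) rfl hT, if_pos (by omega)]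
                      omega
                    · apply hmemE (q - v - 1) (by omega) (by omega)
                      rw [hPmid _ (by omega) (by omega), show q - (q - v - 1) = v + 1 by omega,
                        hEmid1 (v + 1) (by omega) (by omega) (fun hc => by omega),
                        if_neg (by omega)]
                      omega
                  · apply hmemE q (by omega) le_rfl
                    rw [hPq, hE'T hT, if_neg hS']; omega
                  · apply hmemE (q - v) (by omega) (by omega)
                    rw [hPmid _ (by omega) (by omega), show q - (q - v) = v by omega,
                      hEmid1 v (by omega) (by omega) (fun hc => by omega),
                      if_pos (by omega)]
                    omega
                · rintro ⟨p, ⟨-, -, k, hk, hka, rfl⟩, hval⟩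
                  have hkq : k ≤ q := (hka_le k).mp hka
                  rcases Nat.eq_or_lt_of_le hkq with hkq1 | hkq1
                  · rw [hkq1, hPq, hE'T hT, if_neg hS'] at hval; omega
                  · rw [hPmid k (by omega) (by omega), hEmid (q - k) (by omega) (by omega)] at hval
                    by_cases hC : ((gp + 1 ≤ q - k) ↔ ¬(a1 = q - k ∧ T))
                    · rw [if_pos hC] at hval; omega
                    · rw [if_neg hC] at hval; omega
        · -- ¬T : behaves exactly like Grossman
          have hAEf : ¬ AE a b := fun h => hT (hAEb.mp h).2
          have hE'g : euclidGrundy (r, a) = gp := hE'F hT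
          by_cases hgp : gp + 1 ≤ q
          · rw [if_pos (iff_of_true (hSq.mpr hgp) hAEf), show q - 1 + 1 = q by omega]
            apply mex_eq_of
            · intro v hv
              rcases Nat.lt_trichotomy v gp with hvg | hvg | hvg
              · apply hmemE (q - v - 1) (by omega) (by omega)
                rw [hPmid _ (by omega) (by omega), show q - (q - v - 1) = v + 1 by omega,
                  hEmid1 (v + 1) (by omega) (by omega) (fun hc => hT hc.2),
                  if_neg (by omega)]
                omega
              · apply hmemE q (by omega) le_rfl
                rw [hPq, hE'g]; omega
              · apply hmemE (q - v) (by omega) (by omega)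
                rw [hPmid _ (by omega) (by omega), show q - (q - v) = v by omega,
                  hEmid1 v (by omega) (by omega) (fun hc => hT hc.2),
                  if_pos (by omega)]
                omega
            · rintro ⟨p, ⟨-, -, k, hk, hka, rfl⟩, hval⟩
              have hkq : k ≤ q := (hka_le k).mp hka
              rcases Nat.eq_or_lt_of_le hkq with hkq1 | hkq1
              · rw [hkq1, hPq, hE'g] at hval; omega
              · rw [hPmid k (by omega) (by omega),
                  hEmid1 (q - k) (by omega) (by omega) (fun hc => hT hc.2)] at hval
                by_cases hind : gp + 1 ≤ q - k
                · rw [if_pos hind] at hval; omega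
                · rw [if_neg hind] at hval; omega
          · rw [if_neg (fun hC => hgp (hSq.mp (hC.mpr hAEf))), Nat.add_zero]
            apply mex_eq_of
            · intro v hv
              apply hmemE (q - v - 1) (by omega) (by omega)
              rw [hPmid _ (by omega) (by omega), show q - (q - v - 1) = v + 1 by omega,
                hEmid1 (v + 1) (by omega) (by omega) (fun hc => hT hc.2),
                if_neg (by omega)]
              omega
            · rintro ⟨p, ⟨-, -, k, hk, hka, rfl⟩, hval⟩
              have hkq : k ≤ q := (hka_le k).mp hka
              rcases Nat.eq_or_lt_of_le hkq with hkq1 | hkq1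
              · rw [hkq1, hPq, hE'g] at hval; omega
              · rw [hPmid k (by omega) (by omega),
                  hEmid1 (q - k) (by omega) (by omega) (fun hc => hT hc.2),
                  if_neg (by omega)] at hval
                omega
      · -- PARITY, r > 0
        intro hAE
        obtain ⟨ha1q, hT⟩ := hAEb.mp hAE
        have h3 := hIIIra hT
        have hlen1 : (cf a b).length = (cf r a).length + 1 := by
          rw [cf_eq b ha, ← hrdef]; simp
        have hlen2 : 1 ≤ (cf r a).length := by
          rw [cf_eq a hrpos]; simp
        have hn : (cf a b).length - 1 = ((cf r a).length - 1) + 1 := by omega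
        rw [hSq, hn]
        have hstep : (gp + 1 ≤ q) ↔ ¬ (r * r ≤ a % r * a) := by
          rw [hgpdef]
          by_cases hS' : r * r ≤ a % r * a
          · rw [if_pos hS']
            constructor
            · intro h; omega
            · intro h; exact absurd hS' h
          · rw [if_neg hS']
            constructor
            · intro _; exact hS'
            · intro _; omega
        rw [hstep, not_congr h3, Nat.odd_add_one, Nat.not_odd_iff_even]

/-- **Theorem (Grossman's game vs Euclid; Theorem 1 of the paper).**
For `0 < a < b` with continued fraction expansion `[a₀, …, aₙ]` of `b/a`,
`𝒢_G(a,b) = 𝒢_E(a,b)` except when `a₀ = a₁ = ⋯ = aₙ`, in which case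
`𝒢_G(a,b) = 𝒢_E(a,b) − (−1)^{𝓘(a,b)}`. -/
theorem grossmanGrundy_eq_euclidGrundy (a b : ℕ) (ha : 0 < a) (hab : a < b) :
    (¬ (∀ i < (cf a b).length, (cf a b).getD i 0 = (cf a b).getD 0 0) →
      grossmanGrundy (a, b) = euclidGrundy (a, b)) ∧
    ((∀ i < (cf a b).length, (cf a b).getD i 0 = (cf a b).getD 0 0) →
      (grossmanGrundy (a, b) : ℤ) = (euclidGrundy (a, b) : ℤ) - (-1) ^ Ifun a b) := by
  have hcf : cf a b = (b / a) :: cf (b % a) a := cf_eq b ha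
  have h0 : (cf a b).getD 0 0 = b / a := by rw [hcf]; rfl
  have hAEiff : (∀ i < (cf a b).length, (cf a b).getD i 0 = (cf a b).getD 0 0) ↔ AE a b := by
    constructor
    · intro h x hx
      obtain ⟨i, hi, hget⟩ := List.mem_iff_getElem.mp hx
      have h1 := h i hi
      rw [List.getD_eq_getElem _ _ hi, hget, h0] at h1
      exact h1
    · intro h i hi
      have hx : (cf a b)[i] ∈ cf a b := List.getElem_mem hi
      rw [List.getD_eq_getElem _ _ hi, h _ hx, h0]
  obtain ⟨hG, hE, hP⟩ := main_lemma (a + b) a b le_rfl ha hab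
  constructor
  · intro hne
    have hnAE : ¬ AE a b := fun h => hne (hAEiff.mpr h)
    rw [hG, hE]
    by_cases hS : a * a ≤ b % a * b
    · rw [if_pos hS, if_pos (iff_of_true hS hnAE)]
    · rw [if_neg hS, if_neg (fun hC => hS (hC.mpr hnAE))]
  · intro hall
    have hAE := hAEiff.mp hall
    have hPar := hP hAE
    have hlenpos : 0 < (cf a b).length := by rw [hcf]; simp
    have hIfun : Ifun a b = (cf a b).length - 1 := by
      unfold Ifun
      refine le_antisymm (Nat.findGreatest_le _) (Nat.le_findGreatest le_rfl ?_)
      refine ⟨by omega, fun j hj => hall j (by omega), ?_⟩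
      rw [hall ((cf a b).length - 1) (by omega)]
    by_cases hodd : Odd ((cf a b).length - 1)
    · have hS : a * a ≤ b % a * b := hPar.mpr hodd
      rw [hG, hE, if_pos hS, if_neg (fun hC => (hC.mp hS) hAE), hIfun,
        Odd.neg_one_pow hodd]
      omega
    · have hS : ¬ a * a ≤ b % a * b := fun h => hodd (hPar.mp h)
      rw [hG, hE, if_neg hS, if_pos (iff_of_false hS (not_not_intro hAE)), hIfun,
        Even.neg_one_pow (Nat.not_odd_iff_even.mp hodd)]
      have hq1 : 1 ≤ b / a := (Nat.one_le_div_iff ha).mpr (le_of_lt hab)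
      omega
end

section
/- Let a and b be integers with 0 < a < b such that a does not divide b, and let [a₀, a₁, …, aₙ] be the continued fraction expansion of b/a. Then the Sprague–Grundy value 𝒢_M(a,b) of the M-Euclid position {a,b} equals the Sprague–Grundy value 𝒢_E(a,b) of the Euclid position (a,b), except when a₀ = a₁ = ⋯ = a_{n−1} ≤ aₙ, in which case 𝒢_M(a,b) = 𝒢_E(a,b) − (−1)^{𝓘(a,b)}. -/
/-- Moves in M-Euclid.  Positions are unordered pairs of positive integers,
represented as sorted pairs; positions in which one entry is a positive integer
multiple of the other (in particular pairs with equal entries) are terminal;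
from a nonterminal `{a, b}` with `a < b` one may move to `{a, b − k·a}` for any
positive integer `k` with `b − k·a ≥ 1`. -/
def meuclidMove (p q : ℕ × ℕ) : Prop :=
  0 < p.1 ∧ p.1 < p.2 ∧ ¬ p.1 ∣ p.2 ∧
    ∃ k : ℕ, 0 < k ∧ k * p.1 < p.2 ∧
      q = (min p.1 (p.2 - k * p.1), max p.1 (p.2 - k * p.1))

/-- The Sprague–Grundy function of M-Euclid:
`𝒢_M(p) = mex { 𝒢_M(q) : q an option of p }`. -/
noncomputable def meuclidGrundy (p : ℕ × ℕ) : ℕ :=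
  mex {g : ℕ | ∃ q : ℕ × ℕ, ∃ _ : meuclidMove p q, meuclidGrundy q = g}
termination_by p.1 + p.2
decreasing_by
  rename_i hq
  obtain ⟨h1, h2, hnd, k, hk, hle, rfl⟩ := hq
  have : p.1 ≤ k * p.1 := Nat.le_mul_of_pos_left p.1 hk
  simp only [Nat.min_def, Nat.max_def]
  split <;> omega

section AUX

lemma mex_eq (S : Set ℕ) (n : ℕ) (h1 : n ∉ S) (h2 : ∀ m < n, m ∈ S) : mex S = n := by
  unfold mex
  apply le_antisymm
  · exact Nat.sInf_le h1
  · by_contra h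
    push_neg at h
    have hne : {k | k ∉ S}.Nonempty := ⟨n, h1⟩
    have := Nat.sInf_mem hne
    exact this (h2 _ h)

lemma cf_zero (b : ℕ) : cf 0 b = [] := by rw [cf]; simp

lemma cf_succ {a : ℕ} (ha : a ≠ 0) (b : ℕ) : cf a b = (b / a) :: cf (b % a) a := by
  rw [cf]; simp [ha]

def efun (c : List ℕ) : ℕ := c.foldr (fun q v => if q ≤ v then q - 1 else q) 0

lemma efun_cons (q : ℕ) (l : List ℕ) : efun (q :: l) = if q ≤ efun l then q - 1 else q := rfl

def mfun : List ℕ → ℕ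
  | [] => 0
  | [_] => 0
  | q :: x :: l => if q ≤ mfun (x :: l) then q - 1 else q

lemma mfun_cons (q x : ℕ) (l : List ℕ) :
    mfun (q :: x :: l) = if q ≤ mfun (x :: l) then q - 1 else q := rfl

lemma mex_core (S : Set ℕ) (q x : ℕ) (hq : 1 ≤ q)
    (hmemx : x ∈ S)
    (hmemj : ∀ j, 1 ≤ j → j < q → (if j ≤ x then j - 1 else j) ∈ S)
    (hsub : ∀ v ∈ S, v = x ∨ ∃ j, 1 ≤ j ∧ j < q ∧ v = (if j ≤ x then j - 1 else j)) :
    mex S = if q ≤ x then q - 1 else q := by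
  apply mex_eq
  · intro hmem
    rcases hsub _ hmem with h | ⟨j, hj1, hj2, hv⟩
    · split_ifs at h <;> omega
    · split_ifs at hv <;> omega
  · intro m hm
    by_cases hqx : q ≤ x
    · rw [if_pos hqx] at hm
      have h := hmemj (m + 1) (by omega) (by omega)
      rwa [if_pos (by omega), Nat.add_sub_cancel] at h
    · rw [if_neg hqx] at hm
      rcases lt_trichotomy m x with h1 | rfl | h1
      · have h := hmemj (m + 1) (by omega) (by omega)
        rwa [if_pos (by omega), Nat.add_sub_cancel] at h
      · exact hmemx
      · have h := hmemj m (by omega) hm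
        rwa [if_neg (by omega)] at h

lemma euclidGrundy_eq_efun : ∀ N a b, a + b ≤ N → a ≤ b → euclidGrundy (a, b) = efun (cf a b) := by
  intro N
  induction N with
  | zero =>
    intro a b hN hab
    have ha : a = 0 := by omega
    subst ha
    rw [cf_zero, euclidGrundy]
    apply mex_eq
    · rintro ⟨p, hm, -⟩
      exact absurd hm.1 (lt_irrefl 0)
    · intro m hm; exact absurd hm (by simp [efun])
  | succ n ih =>
    intro a b hN hab
    rcases Nat.eq_zero_or_pos a with rfl | ha0
    · rw [cf_zero, euclidGrundy]
      apply mex_eq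
      · rintro ⟨p, hm, -⟩
        exact absurd hm.1 (lt_irrefl 0)
      · intro m hm; exact absurd hm (by simp [efun])
    · have ha : a ≠ 0 := by omega
      obtain ⟨q, r, hq_def, hr_def⟩ : ∃ q r, q = b / a ∧ r = b % a := ⟨_, _, rfl, rfl⟩
      have hdm : q * a + r = b := by
        rw [hq_def, hr_def, Nat.mul_comm]; exact Nat.div_add_mod b a
      have hr : r < a := by rw [hr_def]; exact Nat.mod_lt _ ha0
      have hq1 : 1 ≤ q := by rw [hq_def]; exact (Nat.one_le_div_iff ha0).mpr hab
      have hcf : cf a b = q :: cf r a := by rw [cf_succ ha, ← hq_def, ← hr_def]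
      have key_opt : ∀ k, 1 ≤ k → k ≤ q →
          euclidGrundy (min a (b - k * a), max a (b - k * a)) =
            if k < q then efun ((q - k) :: cf r a) else efun (cf r a) := by
        intro k hk1 hkq
        have e1 : a ≤ k * a := Nat.le_mul_of_pos_left a hk1
        by_cases hlt : k < q
        · have e2 : k * a + a ≤ q * a := by
            have h := Nat.mul_le_mul_right a (show k + 1 ≤ q by omega)
            calc k * a + a = (k + 1) * a := by ring
            _ ≤ q * a := h
          have h1 : a ≤ b - k * a := by omega
          rw [min_eq_left h1, max_eq_right h1, if_pos hlt]
          rw [ih a (b - k * a) (by omega) h1]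
          have hb' : b - k * a = a * (q - k) + r := by
            have e3 : a * (q - k) + k * a = q * a := by
              rw [Nat.mul_comm a (q - k), ← Nat.add_mul]; congr 1; omega
            omega
          rw [cf_succ ha, hb', Nat.mul_add_div ha0, Nat.div_eq_of_lt hr, Nat.add_zero,
            Nat.mul_add_mod, Nat.mod_eq_of_lt hr]
        · have hk : k = q := by omega
          subst hk
          have hbr : b - k * a = r := by omega
          rw [hbr, min_eq_right (le_of_lt hr), max_eq_left (le_of_lt hr), if_neg hlt]
          exact ih r a (by omega) (le_of_lt hr)
      rw [hcf, efun_cons, euclidGrundy]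
      apply mex_core _ q (efun (cf r a)) hq1
      · refine ⟨(min a (b - q * a), max a (b - q * a)), ⟨ha0, hab, q, by omega,
          show q * a ≤ b by omega, rfl⟩, ?_⟩
        rw [key_opt q hq1 le_rfl, if_neg (lt_irrefl q)]
      · intro j hj1 hjq
        have e2 : (q - j) * a ≤ q * a := Nat.mul_le_mul_right a (by omega)
        refine ⟨(min a (b - (q - j) * a), max a (b - (q - j) * a)),
          ⟨ha0, hab, q - j, by omega, show (q - j) * a ≤ b by omega, rfl⟩, ?_⟩
        rw [key_opt (q - j) (by omega) (by omega), if_pos (by omega),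
          show q - (q - j) = j by omega, efun_cons]
      · rintro v ⟨p, ⟨-, -, k, hk0, hkb, rfl⟩, rfl⟩
        have hkb' : k * a ≤ b := hkb
        have hkq : k ≤ q := by
          by_contra hc
          have h2 : (q + 1) * a ≤ k * a := Nat.mul_le_mul_right a (by omega)
          have h3 : (q + 1) * a = q * a + a := by ring
          omega
        simp only [show ((a, b) : ℕ × ℕ).1 = a from rfl, show ((a, b) : ℕ × ℕ).2 = b from rfl]
        rw [key_opt k hk0 hkq]
        by_cases hlt : k < q
        · exact Or.inr ⟨q - k, by omega, by omega, by rw [if_pos hlt, efun_cons]⟩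
        · rw [if_neg hlt]; exact Or.inl rfl

lemma meuclidGrundy_eq_mfun : ∀ N a b, a + b ≤ N → 0 < a → a ≤ b →
    meuclidGrundy (a, b) = mfun (cf a b) := by
  intro N
  induction N with
  | zero => intro a b hN ha0 hab; omega
  | succ n ih =>
    intro a b hN ha0 hab
    have ha : a ≠ 0 := by omega
    by_cases hdvd : a ∣ b
    · have hr0 : b % a = 0 := Nat.mod_eq_zero_of_dvd hdvd
      rw [meuclidGrundy, cf_succ ha, hr0, cf_zero]
      apply mex_eq
      · rintro ⟨p, hm, -⟩
        exact hm.2.2.1 hdvd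
      · intro m hm; exact absurd hm (by simp [mfun])
    · have hab' : a < b := lt_of_le_of_ne hab (by rintro rfl; exact hdvd dvd_rfl)
      obtain ⟨q, r, hq_def, hr_def⟩ : ∃ q r, q = b / a ∧ r = b % a := ⟨_, _, rfl, rfl⟩
      have hdm : q * a + r = b := by
        rw [hq_def, hr_def, Nat.mul_comm]; exact Nat.div_add_mod b a
      have hr : r < a := by rw [hr_def]; exact Nat.mod_lt _ ha0
      have hr1 : 1 ≤ r := by
        rcases Nat.eq_zero_or_pos r with h0 | h; swap; exact h
        exact absurd (Nat.dvd_of_mod_eq_zero (by omega)) hdvd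
      have hq1 : 1 ≤ q := by rw [hq_def]; exact (Nat.one_le_div_iff ha0).mpr hab
      have hcf : cf a b = q :: cf r a := by rw [cf_succ ha, ← hq_def, ← hr_def]
      obtain ⟨y, l, hyl⟩ : ∃ y l, cf r a = y :: l := by
        rw [cf_succ (by omega)]; exact ⟨_, _, rfl⟩
      have hmf : ∀ j, mfun (j :: cf r a) = if j ≤ mfun (cf r a) then j - 1 else j := by
        intro j; rw [hyl, mfun_cons]
      have key_opt : ∀ k, 1 ≤ k → k ≤ q →
          meuclidGrundy (min a (b - k * a), max a (b - k * a)) =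
            if k < q then mfun ((q - k) :: cf r a) else mfun (cf r a) := by
        intro k hk1 hkq
        have e1 : a ≤ k * a := Nat.le_mul_of_pos_left a hk1
        by_cases hlt : k < q
        · have e2 : k * a + a ≤ q * a := by
            have h := Nat.mul_le_mul_right a (show k + 1 ≤ q by omega)
            calc k * a + a = (k + 1) * a := by ring
            _ ≤ q * a := h
          have h1 : a ≤ b - k * a := by omega
          rw [min_eq_left h1, max_eq_right h1, if_pos hlt]
          rw [ih a (b - k * a) (by omega) ha0 h1]
          have hb' : b - k * a = a * (q - k) + r := by
            have e3 : a * (q - k) + k * a = q * a := by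
              rw [Nat.mul_comm a (q - k), ← Nat.add_mul]; congr 1; omega
            omega
          rw [cf_succ ha, hb', Nat.mul_add_div ha0, Nat.div_eq_of_lt hr, Nat.add_zero,
            Nat.mul_add_mod, Nat.mod_eq_of_lt hr]
        · have hk : k = q := by omega
          subst hk
          have hbr : b - k * a = r := by omega
          rw [hbr, min_eq_right (le_of_lt hr), max_eq_left (le_of_lt hr), if_neg hlt]
          exact ih r a (by omega) (by omega) (le_of_lt hr)
      rw [hcf, hmf q, meuclidGrundy]
      apply mex_core _ q (mfun (cf r a)) hq1
      · refine ⟨(min a (b - q * a), max a (b - q * a)), ⟨ha0, hab', hdvd, q, by omega,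
          show q * a < b by omega, rfl⟩, ?_⟩
        rw [key_opt q hq1 le_rfl, if_neg (lt_irrefl q)]
      · intro j hj1 hjq
        have e2 : (q - j) * a ≤ q * a := Nat.mul_le_mul_right a (by omega)
        refine ⟨(min a (b - (q - j) * a), max a (b - (q - j) * a)),
          ⟨ha0, hab', hdvd, q - j, by omega, show (q - j) * a < b by omega, rfl⟩, ?_⟩
        rw [key_opt (q - j) (by omega) (by omega), if_pos (by omega),
          show q - (q - j) = j by omega, hmf j]
      · rintro v ⟨p, ⟨-, -, -, k, hk0, hkb, rfl⟩, rfl⟩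
        have hkb' : k * a < b := hkb
        have hkq : k ≤ q := by
          by_contra hc
          have h2 : (q + 1) * a ≤ k * a := Nat.mul_le_mul_right a (by omega)
          have h3 : (q + 1) * a = q * a + a := by ring
          omega
        simp only [show ((a, b) : ℕ × ℕ).1 = a from rfl, show ((a, b) : ℕ × ℕ).2 = b from rfl]
        rw [key_opt k hk0 hkq]
        by_cases hlt : k < q
        · exact Or.inr ⟨q - k, by omega, by omega, by rw [if_pos hlt, hmf (q - k)]⟩
        · rw [if_neg hlt]; exact Or.inl rfl

def flat (c : List ℕ) : Prop :=
  (∀ j < c.length - 1, c.getD j 0 = c.getD 0 0) ∧ c.getD 0 0 ≤ c.getD (c.length - 1) 0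

lemma flat_cons (q y z : ℕ) (l : List ℕ) :
    flat (q :: y :: z :: l) ↔ flat (y :: z :: l) ∧ y = q := by
  unfold flat
  simp only [List.length_cons, List.getD_cons_zero, Nat.add_sub_cancel]
  constructor
  · rintro ⟨h1, h2⟩
    have hy : y = q := by simpa using h1 1 (by omega)
    refine ⟨⟨?_, ?_⟩, hy⟩
    · intro j hj
      have := h1 (j + 1) (by simp at hj ⊢; omega)
      simpa [hy] using this
    · have h2' := h2
      rw [show l.length + 1 + 1 = (l.length + 1) + 1 from rfl, List.getD_cons_succ] at h2'
      rw [hy]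
      simpa using h2'
  · rintro ⟨⟨h1, h2⟩, rfl⟩
    constructor
    · intro j hj
      match j with
      | 0 => simp
      | j + 1 =>
        rw [List.getD_cons_succ]
        have := h1 j (by simp at hj ⊢; omega)
        simpa using this
    · rw [show l.length + 1 + 1 = (l.length + 1) + 1 from rfl, List.getD_cons_succ]
      simpa using h2

lemma cf_mem_pos : ∀ (a : ℕ), ∀ b, a < b → ∀ x ∈ cf a b, 1 ≤ x := by
  intro a
  induction a using Nat.strong_induction_on with
  | _ a ih =>
    intro b hab x hx
    rcases Nat.eq_zero_or_pos a with rfl | ha0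
    · rw [cf_zero] at hx; simp at hx
    · rw [cf_succ (by omega)] at hx
      rcases List.mem_cons.1 hx with rfl | hx'
      · exact (Nat.one_le_div_iff ha0).mpr (le_of_lt hab)
      · exact ih (b % a) (Nat.mod_lt _ ha0) a (Nat.mod_lt _ ha0) x hx'

lemma key : ∀ (c : List ℕ), 2 ≤ c.length → (∀ x ∈ c, 1 ≤ x) →
    ((flat c → if Even c.length then efun c = c.getD 0 0 - 1 ∧ mfun c = c.getD 0 0
      else efun c = c.getD 0 0 ∧ mfun c = c.getD 0 0 - 1)
     ∧ (¬ flat c → mfun c = efun c)) := by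
  intro c
  induction c with
  | nil => intro h; simp at h
  | cons q l ih =>
    intro hlen hpos
    have hq : 1 ≤ q := hpos q (by simp)
    match l with
    | [] => simp at hlen
    | [y] =>
      have hy : 1 ≤ y := hpos y (by simp)
      have hE : efun [q, y] = if q ≤ y then q - 1 else q := by
        rw [efun_cons, show efun [y] = y from by rw [efun_cons]; simp [efun]; omega]
      have hM : mfun [q, y] = q := by
        rw [mfun_cons, show mfun [y] = 0 from rfl, if_neg (by omega)]
      have hf : flat [q, y] ↔ q ≤ y := by
        unfold flat
        simp
      constructor
      · intro hfl
        rw [hf] at hfl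
        rw [if_pos (by norm_num)]
        refine ⟨?_, ?_⟩
        · rw [hE, if_pos hfl]; simp
        · rw [hM]; simp
      · intro hfl
        rw [hf] at hfl
        rw [hE, if_neg hfl, hM]
    | y :: z :: l' =>
      have hlen' : 2 ≤ (y :: z :: l').length := by simp
      have hpos' : ∀ x ∈ (y :: z :: l'), 1 ≤ x := fun x hx => hpos x (by simp at hx ⊢; tauto)
      have hy : 1 ≤ y := hpos' y (by simp)
      obtain ⟨IH1, IH2⟩ := ih hlen' hpos'
      have hgd : (y :: z :: l').getD 0 0 = y := rfl
      have hE : efun (q :: y :: z :: l') = if q ≤ efun (y :: z :: l') then q - 1 else q :=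
        efun_cons _ _
      have hM : mfun (q :: y :: z :: l') = if q ≤ mfun (y :: z :: l') then q - 1 else q :=
        mfun_cons _ _ _
      have hpar : Even (q :: y :: z :: l').length ↔ ¬ Even (y :: z :: l').length := by
        simp only [List.length_cons]
        constructor
        · intro h he; rcases h with ⟨k, hk⟩; rcases he with ⟨j, hj⟩; omega
        · intro h
          rcases Nat.even_or_odd (l'.length + 2) with he | ho
          · exact absurd he h
          · rcases ho with ⟨k, hk⟩; exact ⟨k + 1, by omega⟩
      constructor
      · intro hfl
        obtain ⟨hfl', rfl⟩ := (flat_cons q y z l').mp hfl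
        have h1 := IH1 hfl'
        rw [hgd] at h1
        by_cases he : Even (y :: z :: l').length
        · rw [if_pos he] at h1
          rw [if_neg (by rw [hpar]; exact fun h => h he)]
          obtain ⟨he1, hm1⟩ := h1
          constructor
          · rw [hE, he1, if_neg (by omega)]; rfl
          · rw [hM, hm1, if_pos le_rfl]; rfl
        · rw [if_neg he] at h1
          rw [if_pos (hpar.mpr he)]
          obtain ⟨he1, hm1⟩ := h1
          constructor
          · rw [hE, he1, if_pos le_rfl]; rfl
          · rw [hM, hm1, if_neg (by omega)]; rfl
      · intro hfl
        by_cases hfl' : flat (y :: z :: l')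
        · have hyq : ¬ y = q := fun h => hfl ((flat_cons q y z l').mpr ⟨hfl', h⟩)
          have h1 := IH1 hfl'
          rw [hgd] at h1
          rw [hE, hM]
          split_ifs at h1 with he <;> obtain ⟨he1, hm1⟩ := h1 <;>
            rw [he1, hm1] <;> split_ifs <;> omega
        · rw [hE, hM, IH2 hfl']

end AUX


/-- **Corollary of the paper, first part.**  For `0 < a < b` with `a ∤ b` and
continued fraction expansion `[a₀, …, aₙ]` of `b/a`,
`𝒢_M(a,b) = 𝒢_E(a,b)` except when `a₀ = a₁ = ⋯ = a_{n−1} ≤ aₙ`, in which case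
`𝒢_M(a,b) = 𝒢_E(a,b) − (−1)^{𝓘(a,b)}`. -/
theorem meuclidGrundy_eq_euclidGrundy (a b : ℕ) (ha : 0 < a) (hab : a < b) (hnd : ¬ a ∣ b) :
    (¬ ((∀ j < (cf a b).length - 1, (cf a b).getD j 0 = (cf a b).getD 0 0) ∧
        (cf a b).getD 0 0 ≤ (cf a b).getD ((cf a b).length - 1) 0) →
      meuclidGrundy (a, b) = euclidGrundy (a, b)) ∧
    (((∀ j < (cf a b).length - 1, (cf a b).getD j 0 = (cf a b).getD 0 0) ∧
        (cf a b).getD 0 0 ≤ (cf a b).getD ((cf a b).length - 1) 0) →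
      (meuclidGrundy (a, b) : ℤ) = (euclidGrundy (a, b) : ℤ) - (-1) ^ Ifun a b) := by
  have ha' : a ≠ 0 := by omega
  have hr1 : b % a ≠ 0 := fun h => hnd (Nat.dvd_of_mod_eq_zero h)
  obtain ⟨y, l, hyl⟩ : ∃ y l, cf (b % a) a = y :: l := by
    rw [cf_succ hr1]; exact ⟨_, _, rfl⟩
  have hcf : cf a b = (b / a) :: y :: l := by rw [cf_succ ha', hyl]
  have hlen : 2 ≤ (cf a b).length := by rw [hcf]; simp
  have hpos : ∀ x ∈ cf a b, 1 ≤ x := cf_mem_pos a b hab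
  have hE : euclidGrundy (a, b) = efun (cf a b) :=
    euclidGrundy_eq_efun (a + b) a b le_rfl (le_of_lt hab)
  have hM : meuclidGrundy (a, b) = mfun (cf a b) :=
    meuclidGrundy_eq_mfun (a + b) a b le_rfl ha (le_of_lt hab)
  obtain ⟨K1, K2⟩ := key (cf a b) hlen hpos
  constructor
  · intro hnf
    rw [hE, hM]
    exact K2 (fun h => hnf ⟨h.1, h.2⟩)
  · intro hf
    have hfl : flat (cf a b) := ⟨hf.1, hf.2⟩
    have hI : Ifun a b = (cf a b).length - 1 := by
      unfold Ifun
      apply le_antisymm (Nat.findGreatest_le _)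
      exact Nat.le_findGreatest le_rfl ⟨by omega, hf.1, hf.2⟩
    have h0 : 1 ≤ (cf a b).getD 0 0 := by
      have : (b / a) ∈ cf a b := by rw [hcf]; simp
      rw [hcf]
      exact hpos _ this
    have h1 := K1 hfl
    rw [hM, hE, hI]
    by_cases he : Even (cf a b).length
    · rw [if_pos he] at h1
      have hodd : Odd ((cf a b).length - 1) := by
        rcases he with ⟨k, hk⟩; exact ⟨k - 1, by omega⟩
      rw [Odd.neg_one_pow hodd]
      omega
    · rw [if_neg he] at h1
      have hev : Even ((cf a b).length - 1) := by
        rcases Nat.even_or_odd (cf a b).length with h | h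
        · exact absurd h he
        · rcases h with ⟨k, hk⟩; exact ⟨k, by omega⟩
      rw [Even.neg_one_pow hev]
      omega
end

section
/- Let a and b be integers with 0 < a < b such that a does not divide b, and let [a₀, a₁, …, aₙ] be the continued fraction expansion of b/a. Then the Sprague–Grundy value 𝒢_M(a,b) of the M-Euclid position {a,b} equals the Sprague–Grundy value 𝒢_G(a,b) of the position {a,b} in Grossman's game, except when a₀ = a₁ = ⋯ = a_{n−1} < aₙ, in which case 𝒢_M(a,b) = 𝒢_G(a,b) − (−1)^{𝓘(a,b)}. -/
lemma mex_empty : mex (∅ : Set ℕ) = 0 :=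
  mex_eq_of (by intro k hk; omega) (by simp)

lemma cf_pos (a b : ℕ) (ha : a ≠ 0) : cf a b = (b / a) :: cf (b % a) a := by
  rw [cf]; simp [ha]

lemma cf_ne_nil (a b : ℕ) (ha : a ≠ 0) : cf a b ≠ [] := by
  rw [cf_pos a b ha]; simp

/-- Predicate deciding whether the Grundy value of a Grossman position equals
`a₀` (true) or `a₀ - 1` (false), in terms of the continued fraction. -/
def PG : List ℕ → Bool
  | [] => false
  | [_] => false
  | x :: y :: l => if y < x then true else if x < y then false else !PG (y :: l)

/-- The analogous predicate for M-Euclid. -/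
def PM : List ℕ → Bool
  | [] => false
  | [_] => false
  | x :: y :: l => if y < x then true else if x < y then decide (l = []) else !PM (y :: l)

lemma PG_single (x : ℕ) : PG [x] = false := rfl

lemma PG_cons (x y : ℕ) (l : List ℕ) :
    PG (x :: y :: l) = if y < x then true else if x < y then false else !PG (y :: l) := by
  simp [PG]

lemma PM_cons (x y : ℕ) (l : List ℕ) :
    PM (x :: y :: l) = if y < x then true else if x < y then decide (l = []) else !PM (y :: l) := by
  simp [PM]

lemma PM_pair (x y : ℕ) : PM [x, y] = true := by
  rw [PM_cons]
  split_ifs <;> simp [PM]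

lemma PG_cons_ind {r a : ℕ} (hr : r ≠ 0) (j : ℕ) :
    (if PG (j :: cf r a) then (1:ℕ) else 0) =
      if a / r < j then 1 else if j < a / r then 0
        else 1 - (if PG (cf r a) then 1 else 0) := by
  rw [cf_pos r a hr, PG_cons, ← cf_pos r a hr]
  split_ifs <;> simp_all

lemma PM_cons_ind {r a : ℕ} (hr : r ≠ 0) (hra : a % r ≠ 0) (j : ℕ) :
    (if PM (j :: cf r a) then (1:ℕ) else 0) =
      if a / r < j then 1 else if j < a / r then 0
        else 1 - (if PM (cf r a) then 1 else 0) := by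
  have hnil : cf (a % r) r ≠ [] := cf_ne_nil _ _ hra
  rw [cf_pos r a hr, PM_cons, ← cf_pos r a hr]
  simp only [hnil, decide_eq_true_eq]
  split_ifs <;> simp_all

lemma mex_main {S : Set ℕ} {q t e : ℕ} (hq : 1 ≤ q) (ht : 1 ≤ t) (he : e ≤ 1)
    (hmem : ∀ g : ℕ, g ∈ S ↔
      ((∃ j, 1 ≤ j ∧ j ≤ q - 1 ∧
        g = j - 1 + (if t < j then 1 else if j < t then 0 else 1 - e)) ∨
      g = t - 1 + e)) :
    mex S = q - 1 + (if t < q then 1 else if q < t then 0 else 1 - e) := by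
  apply mex_eq_of
  · intro i hi
    rw [hmem]
    by_cases hw : i = t - 1 + e
    · exact Or.inr hw
    · refine Or.inl ⟨if i < t then i + 1 else if i = t then t else i, ?_, ?_, ?_⟩ <;>
        split_ifs at hi ⊢ <;> omega
  · rw [hmem]
    rintro (⟨j, hj1, hj2, hj3⟩ | h) <;> split_ifs at * <;> omega

lemma mex_set_A {S : Set ℕ} {q : ℕ} (hq : 1 ≤ q)
    (hmem : ∀ g : ℕ, g ∈ S ↔ ((∃ j, 1 ≤ j ∧ j ≤ q - 1 ∧ g = j) ∨ g = 0)) :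
    mex S = q := by
  apply mex_eq_of
  · intro i hi
    rw [hmem]
    rcases i with _ | i
    · exact Or.inr rfl
    · exact Or.inl ⟨i + 1, by omega, by omega, rfl⟩
  · rw [hmem]
    rintro (⟨j, h1, h2, h3⟩ | h) <;> omega

lemma mex_set_B {S : Set ℕ} {q : ℕ} (hq : 1 ≤ q)
    (hmem : ∀ g : ℕ, g ∈ S ↔ ∃ j, 1 ≤ j ∧ j ≤ q - 1 ∧ g = j - 1) :
    mex S = q - 1 := by
  apply mex_eq_of
  · intro i hi
    rw [hmem]
    exact ⟨i + 1, by omega, by omega, by omega⟩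
  · rw [hmem]
    rintro ⟨j, h1, h2, h3⟩
    omega

-- main lemma
lemma grossman_formula : ∀ (n a b : ℕ), a + b ≤ n → 0 < a → a ≤ b →
    grossmanGrundy (a, b) = b / a - 1 + (if PG (cf a b) then 1 else 0) := by
  intro n
  induction n with
  | zero => intro a b h ha hab; omega
  | succ n ih =>
    intro a b hn ha hab
    have hq1 : 1 ≤ b / a := (Nat.one_le_div_iff ha).mpr hab
    have hdm : a * (b / a) + b % a = b := Nat.div_add_mod b a
    have hmlt : b % a < a := Nat.mod_lt b ha
    have hcomm : (b / a) * a = a * (b / a) := Nat.mul_comm _ _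
    have hsub : ∀ k, k < b / a → b - k * a = a * (b / a - k) + b % a := by
      intro k hk
      have h2 : a * (b / a - k) + a * k = a * (b / a) := by
        rw [← Nat.mul_add]; congr 1; omega
      have h3 : k * a = a * k := Nat.mul_comm k a
      omega
    have hoptdiv : ∀ k, k < b / a → (b - k * a) / a = b / a - k ∧ (b - k * a) % a = b % a := by
      intro k hk
      rw [hsub k hk, Nat.mul_add_div ha, Nat.mul_add_mod, Nat.div_eq_of_lt hmlt,
        Nat.mod_eq_of_lt hmlt, Nat.add_zero]
      exact ⟨rfl, rfl⟩
    have hoptge : ∀ k, k < b / a → a + b % a ≤ b - k * a := by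
      intro k hk
      have h1 := hsub k hk
      have h2 : a ≤ a * (b / a - k) := Nat.le_mul_of_pos_right a (by omega)
      omega
    have hklt : ∀ k, 0 < k → k * a < b → k ≤ b / a := by
      intro k hk0 hk
      exact (Nat.le_div_iff_mul_le ha).mpr hk.le
    have hval : ∀ k, 0 < k → k < b / a →
        grossmanGrundy (a, b - k * a) =
          (b / a - k) - 1 + (if PG ((b / a - k) :: cf (b % a) a) then 1 else 0) := by
      intro k hk0 hk
      have hge := hoptge k hk
      have h1 : a + (b - k * a) ≤ n := by
        have : a ≤ k * a := Nat.le_mul_of_pos_left a hk0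
        omega
      rw [ih a (b - k * a) h1 ha (by omega), (hoptdiv k hk).1]
      congr 2
      rw [cf_pos a (b - k * a) ha.ne', (hoptdiv k hk).1, (hoptdiv k hk).2]
    rw [grossmanGrundy]
    by_cases hr : b % a = 0
    · -- a divides b
      rw [cf_pos a b ha.ne', hr, cf_zero, PG_single]
      simp only [Bool.false_eq_true, if_false, Nat.add_zero]
      apply mex_set_B hq1
      intro g
      simp only [Set.mem_setOf_eq, grossmanMove]
      constructor
      · rintro ⟨p', ⟨-, -, k, hk0, hka, rfl⟩, rfl⟩
        have hkq : k ≤ b / a := hklt k hk0 hka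
        have hkq' : k < b / a := by
          rcases Nat.lt_or_ge k (b / a) with h | h
          · exact h
          · have hk' : k = b / a := by omega
            subst hk'
            omega
        have hge := hoptge k hkq'
        rw [min_eq_left (by omega), max_eq_right (by omega)]
        refine ⟨b / a - k, by omega, by omega, ?_⟩
        rw [hval k hk0 hkq', hr, cf_zero, PG_single]
        simp
      · rintro ⟨j, hj1, hj2, rfl⟩
        have hq2 : 2 ≤ b / a := by omega
        have hblt : a < b := by
          have := Nat.mul_le_mul_left a hq2
          omega
        have hklt' : b / a - j < b / a := by omega
        have hge := hoptge (b / a - j) hklt'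
        have hk0' : 0 < b / a - j := by omega
        have hka : (b / a - j) * a < b := by
          have h1 : (b / a - j) * a ≤ b - (b / a - j) * a + (b / a - j) * a := by omega
          omega
        refine ⟨(a, b - (b / a - j) * a), ⟨ha, hblt, b / a - j, hk0', hka,
          by rw [min_eq_left (by omega), max_eq_right (by omega)]⟩, ?_⟩
        rw [hval _ hk0' hklt', hr, cf_zero, PG_single]
        simp only [Bool.false_eq_true, if_false, Nat.add_zero]
        omega
    · -- a does not divide b
      have ht1 : 1 ≤ a / (b % a) := (Nat.one_le_div_iff (by omega)).mpr (le_of_lt hmlt)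
      have hsubr : b - (b / a) * a = b % a := by omega
      have hqa : (b / a) * a < b := by omega
      rw [cf_pos a b ha.ne', PG_cons_ind hr (b / a)]
      apply mex_main hq1 ht1 (by split_ifs <;> omega)
      intro g
      simp only [Set.mem_setOf_eq, grossmanMove]
      constructor
      · rintro ⟨p', ⟨-, -, k, hk0, hka, rfl⟩, rfl⟩
        have hkq : k ≤ b / a := hklt k hk0 hka
        rcases Nat.lt_or_ge k (b / a) with hk | hk
        · have hge := hoptge k hk
          rw [min_eq_left (by omega), max_eq_right (by omega)]
          refine Or.inl ⟨b / a - k, by omega, by omega, ?_⟩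
          rw [hval k hk0 hk, PG_cons_ind hr]
        · have hk' : k = b / a := by omega
          subst hk'
          rw [hsubr, min_eq_right (by omega), max_eq_left (by omega)]
          refine Or.inr ?_
          rw [ih (b % a) a (by omega) (by omega) (by omega)]
      · rintro (⟨j, hj1, hj2, hgv⟩ | hgv)
        · have hq2 : 2 ≤ b / a := by omega
          have hklt' : b / a - j < b / a := by omega
          have hge := hoptge (b / a - j) hklt'
          have hk0' : 0 < b / a - j := by omega
          have hka : (b / a - j) * a < b := by
            have h1 : (b / a - j) * a ≤ b - (b / a - j) * a + (b / a - j) * a := by omega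
            omega
          have hblt : a < b := by
            have := Nat.mul_le_mul_left a hq2
            omega
          refine ⟨(a, b - (b / a - j) * a), ⟨ha, hblt, b / a - j, hk0', hka,
            by rw [min_eq_left (by omega), max_eq_right (by omega)]⟩, ?_⟩
          rw [hval _ hk0' hklt', PG_cons_ind hr,
            show b / a - (b / a - j) = j from by omega]
          exact hgv.symm
        · have halt : a < b := by
            have : a ≤ a * (b / a) := Nat.le_mul_of_pos_right a (by omega)
            omega
          refine ⟨(b % a, a), ⟨ha, halt, b / a, by omega, hqa,
            by rw [hsubr, min_eq_right (by omega), max_eq_left (by omega)]⟩, ?_⟩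
          rw [ih (b % a) a (by omega) (by omega) (by omega)]
          exact hgv.symm

lemma meuclid_divides {a b : ℕ} (h : a ∣ b) : meuclidGrundy (a, b) = 0 := by
  rw [meuclidGrundy]
  have hS : {g : ℕ | ∃ q : ℕ × ℕ, ∃ _ : meuclidMove (a, b) q, meuclidGrundy q = g} = ∅ := by
    ext g
    simp only [Set.mem_setOf_eq, Set.mem_empty_iff_false, iff_false]
    rintro ⟨q, ⟨-, -, hnd, -⟩, -⟩
    exact hnd h
  rw [hS, mex_empty]

lemma meuclid_formula : ∀ (n a b : ℕ), a + b ≤ n → 0 < a → a < b → ¬ a ∣ b →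
    meuclidGrundy (a, b) = b / a - 1 + (if PM (cf a b) then 1 else 0) := by
  intro n
  induction n with
  | zero => intro a b h ha hab hnd; omega
  | succ n ih =>
    intro a b hn ha hab hnd
    have hr : b % a ≠ 0 := fun h => hnd (Nat.dvd_of_mod_eq_zero h)
    have hq1 : 1 ≤ b / a := (Nat.one_le_div_iff ha).mpr hab.le
    have hdm : a * (b / a) + b % a = b := Nat.div_add_mod b a
    have hmlt : b % a < a := Nat.mod_lt b ha
    have hcomm : (b / a) * a = a * (b / a) := Nat.mul_comm _ _
    have hsub : ∀ k, k < b / a → b - k * a = a * (b / a - k) + b % a := by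
      intro k hk
      have h2 : a * (b / a - k) + a * k = a * (b / a) := by
        rw [← Nat.mul_add]; congr 1; omega
      have h3 : k * a = a * k := Nat.mul_comm k a
      omega
    have hoptdiv : ∀ k, k < b / a → (b - k * a) / a = b / a - k ∧ (b - k * a) % a = b % a := by
      intro k hk
      rw [hsub k hk, Nat.mul_add_div ha, Nat.mul_add_mod, Nat.div_eq_of_lt hmlt,
        Nat.mod_eq_of_lt hmlt, Nat.add_zero]
      exact ⟨rfl, rfl⟩
    have hoptge : ∀ k, k < b / a → a + b % a ≤ b - k * a := by
      intro k hk
      have h1 := hsub k hk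
      have h2 : a ≤ a * (b / a - k) := Nat.le_mul_of_pos_right a (by omega)
      omega
    have hklt : ∀ k, 0 < k → k * a < b → k ≤ b / a := by
      intro k hk0 hk
      exact (Nat.le_div_iff_mul_le ha).mpr hk.le
    have hsubr : b - (b / a) * a = b % a := by omega
    have hqa : (b / a) * a < b := by omega
    have hval : ∀ k, 0 < k → k < b / a →
        meuclidGrundy (a, b - k * a) =
          (b / a - k) - 1 + (if PM ((b / a - k) :: cf (b % a) a) then 1 else 0) := by
      intro k hk0 hk
      have hge := hoptge k hk
      have h1 : a + (b - k * a) ≤ n := by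
        have : a ≤ k * a := Nat.le_mul_of_pos_left a hk0
        omega
      have hnd' : ¬ a ∣ (b - k * a) := by
        intro hd
        have := (hoptdiv k hk).2
        have h0 : (b - k * a) % a = 0 := Nat.eq_zero_of_dvd_of_lt hd |> fun _ => by
          exact Nat.mod_eq_zero_of_dvd hd
        omega
      rw [ih a (b - k * a) h1 ha (by omega) hnd', (hoptdiv k hk).1]
      congr 2
      rw [cf_pos a (b - k * a) ha.ne', (hoptdiv k hk).1, (hoptdiv k hk).2]
    rw [meuclidGrundy]
    by_cases hra : a % (b % a) = 0
    · -- r divides a : case A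
      have hcfr : cf (b % a) a = [a / (b % a)] := by
        rw [cf_pos _ _ hr, hra, cf_zero]
      rw [cf_pos a b ha.ne', hcfr, PM_pair]
      simp only [if_true]
      have htarget : b / a - 1 + 1 = b / a := by omega
      rw [htarget]
      apply mex_set_A hq1
      intro g
      simp only [Set.mem_setOf_eq, meuclidMove]
      constructor
      · rintro ⟨p', ⟨-, -, -, k, hk0, hka, rfl⟩, rfl⟩
        have hkq : k ≤ b / a := hklt k hk0 hka
        rcases Nat.lt_or_ge k (b / a) with hk | hk
        · have hge := hoptge k hk
          rw [min_eq_left (by omega), max_eq_right (by omega)]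
          refine Or.inl ⟨b / a - k, by omega, by omega, ?_⟩
          rw [hval k hk0 hk, hcfr, PM_pair]
          simp only [if_true]
          omega
        · have hk' : k = b / a := by omega
          subst hk'
          rw [hsubr, min_eq_right (by omega), max_eq_left (by omega)]
          exact Or.inr (meuclid_divides (Nat.dvd_of_mod_eq_zero hra))
      · rintro (⟨j, hj1, hj2, hgv⟩ | rfl)
        · have hklt' : b / a - j < b / a := by omega
          have hge := hoptge (b / a - j) hklt'
          have hk0' : 0 < b / a - j := by omega
          have hka : (b / a - j) * a < b := by
            have h1 : (b / a - j) * a ≤ b - (b / a - j) * a + (b / a - j) * a := by omega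
            omega
          refine ⟨(a, b - (b / a - j) * a), ⟨ha, hab, hnd, b / a - j, hk0', hka,
            by rw [min_eq_left (by omega), max_eq_right (by omega)]⟩, ?_⟩
          rw [hval _ hk0' hklt', hcfr, PM_pair]
          simp only [if_true]
          omega
        · refine ⟨(b % a, a), ⟨ha, hab, hnd, b / a, by omega, hqa,
            by rw [hsubr, min_eq_right (by omega), max_eq_left (by omega)]⟩, ?_⟩
          exact meuclid_divides (Nat.dvd_of_mod_eq_zero hra)
    · -- case B
      have ht1 : 1 ≤ a / (b % a) := (Nat.one_le_div_iff (by omega)).mpr (le_of_lt hmlt)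
      have hndr : ¬ (b % a) ∣ a := fun hd => hra (Nat.mod_eq_zero_of_dvd hd)
      rw [cf_pos a b ha.ne', PM_cons_ind hr hra (b / a)]
      apply mex_main hq1 ht1 (by split_ifs <;> omega)
      intro g
      simp only [Set.mem_setOf_eq, meuclidMove]
      constructor
      · rintro ⟨p', ⟨-, -, -, k, hk0, hka, rfl⟩, rfl⟩
        have hkq : k ≤ b / a := hklt k hk0 hka
        rcases Nat.lt_or_ge k (b / a) with hk | hk
        · have hge := hoptge k hk
          rw [min_eq_left (by omega), max_eq_right (by omega)]
          refine Or.inl ⟨b / a - k, by omega, by omega, ?_⟩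
          rw [hval k hk0 hk, PM_cons_ind hr hra]
        · have hk' : k = b / a := by omega
          subst hk'
          rw [hsubr, min_eq_right (by omega), max_eq_left (by omega)]
          refine Or.inr ?_
          rw [ih (b % a) a (by omega) (by omega) (by omega) hndr]
      · rintro (⟨j, hj1, hj2, hgv⟩ | hgv)
        · have hklt' : b / a - j < b / a := by omega
          have hge := hoptge (b / a - j) hklt'
          have hk0' : 0 < b / a - j := by omega
          have hka : (b / a - j) * a < b := by
            have h1 : (b / a - j) * a ≤ b - (b / a - j) * a + (b / a - j) * a := by omega
            omega
          refine ⟨(a, b - (b / a - j) * a), ⟨ha, hab, hnd, b / a - j, hk0', hka,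
            by rw [min_eq_left (by omega), max_eq_right (by omega)]⟩, ?_⟩
          rw [hval _ hk0' hklt', PM_cons_ind hr hra,
            show b / a - (b / a - j) = j from by omega]
          exact hgv.symm
        · refine ⟨(b % a, a), ⟨ha, hab, hnd, b / a, by omega, hqa,
            by rw [hsubr, min_eq_right (by omega), max_eq_left (by omega)]⟩, ?_⟩
          rw [ih (b % a) a (by omega) (by omega) (by omega) hndr]
          exact hgv.symm


lemma PM_eq_PG_of_not : ∀ (c : List ℕ), 2 ≤ c.length →
    ¬ ((∀ j < c.length - 1, c.getD j 0 = c.getD 0 0) ∧ c.getD 0 0 < c.getD (c.length - 1) 0) →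
    PM c = PG c := by
  intro c
  induction c with
  | nil => intro h2; simp at h2
  | cons x t ih =>
    cases t with
    | nil => intro h2; simp at h2
    | cons y l =>
      intro h2 h
      cases l with
      | nil =>
        have hnxy : ¬ x < y := by
          intro hxy
          refine h ⟨?_, ?_⟩
          · intro j hj
            have : j = 0 := by simpa using hj
            subst this; rfl
          · simpa using hxy
        rcases Nat.lt_trichotomy y x with h1 | h1 | h1
        · simp [PM, PG, h1]
        · subst h1
          simp [PM, PG]
        · exact absurd h1 hnxy
      | cons z m =>
        rcases Nat.lt_trichotomy y x with h1 | h1 | h1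
        · simp [PM, PG, h1]
        · subst h1
          have hntail : ¬ ((∀ j < (y :: z :: m).length - 1,
              (y :: z :: m).getD j 0 = (y :: z :: m).getD 0 0) ∧
              (y :: z :: m).getD 0 0 < (y :: z :: m).getD ((y :: z :: m).length - 1) 0) := by
            rintro ⟨hc1, hc2⟩
            refine h ⟨?_, ?_⟩
            · intro j hj
              match j with
              | 0 => rfl
              | Nat.succ i =>
                have hi : i < (y :: z :: m).length - 1 := by
                  simp only [List.length_cons] at hj ⊢; omega
                have := hc1 i hi
                simpa using this
            · show (y :: y :: z :: m).getD 0 0 <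
                (y :: y :: z :: m).getD ((y :: y :: z :: m).length - 1) 0
              have hlen : (y :: y :: z :: m).length - 1 = ((y :: z :: m).length - 1) + 1 := by
                simp only [List.length_cons]; omega
              rw [hlen, List.getD_cons_succ]
              exact hc2
          have htl := ih (by simp) hntail
          rw [PM_cons, PG_cons, if_neg (lt_irrefl y), if_neg (lt_irrefl y),
            if_neg (lt_irrefl y), if_neg (lt_irrefl y), htl]
        · simp [PM, PG, h1, Nat.lt_asymm h1]

lemma special_PG_PM : ∀ (c : List ℕ), 2 ≤ c.length →
    ((∀ j < c.length - 1, c.getD j 0 = c.getD 0 0) ∧ c.getD 0 0 < c.getD (c.length - 1) 0) →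
    PG c = decide (c.length % 2 = 1) ∧ PM c = decide (c.length % 2 = 0) := by
  intro c
  induction c with
  | nil => intro h2; simp at h2
  | cons x t ih =>
    cases t with
    | nil => intro h2; simp at h2
    | cons y l =>
      intro h2 h
      cases l with
      | nil =>
        have hxy : x < y := by simpa using h.2
        constructor
        · simp [PG, hxy, Nat.lt_asymm hxy]
        · simp [PM, hxy, Nat.lt_asymm hxy]
      | cons z m =>
        have hxy : y = x := by
          have := h.1 1 (by simp only [List.length_cons]; omega)
          simpa using this
        subst hxy
        have htail : (∀ j < (y :: z :: m).length - 1,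
            (y :: z :: m).getD j 0 = (y :: z :: m).getD 0 0) ∧
            (y :: z :: m).getD 0 0 < (y :: z :: m).getD ((y :: z :: m).length - 1) 0 := by
          constructor
          · intro j hj
            have hj1 : j + 1 < (y :: y :: z :: m).length - 1 := by
              simp only [List.length_cons] at hj ⊢; omega
            have := h.1 (j + 1) hj1
            simpa using this
          · have hlen : (y :: y :: z :: m).length - 1 = ((y :: z :: m).length - 1) + 1 := by
              simp only [List.length_cons]; omega
            have := h.2
            rw [hlen, List.getD_cons_succ] at this
            exact this
        obtain ⟨hg, hm⟩ := ih (by simp) htail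
        constructor
        · rw [PG_cons, if_neg (lt_irrefl y), if_neg (lt_irrefl y), hg]
          rcases Nat.mod_two_eq_zero_or_one (y :: z :: m).length with hp | hp
          · have hp2 : (y :: y :: z :: m).length % 2 = 1 := by
              simp only [List.length_cons] at hp ⊢; omega
            rw [hp, hp2]; simp
          · have hp2 : (y :: y :: z :: m).length % 2 = 0 := by
              simp only [List.length_cons] at hp ⊢; omega
            rw [hp, hp2]; simp
        · rw [PM_cons, if_neg (lt_irrefl y), if_neg (lt_irrefl y), hm]
          rcases Nat.mod_two_eq_zero_or_one (y :: z :: m).length with hp | hp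
          · have hp2 : (y :: y :: z :: m).length % 2 = 1 := by
              simp only [List.length_cons] at hp ⊢; omega
            rw [hp, hp2]; simp
          · have hp2 : (y :: y :: z :: m).length % 2 = 0 := by
              simp only [List.length_cons] at hp ⊢; omega
            rw [hp, hp2]; simp

/-- **Corollary of the paper, second part.**  For `0 < a < b` with `a ∤ b` and
continued fraction expansion `[a₀, …, aₙ]` of `b/a`,
`𝒢_M(a,b) = 𝒢_G(a,b)` except when `a₀ = a₁ = ⋯ = a_{n−1} < aₙ`, in which case
`𝒢_M(a,b) = 𝒢_G(a,b) − (−1)^{𝓘(a,b)}`. -/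
theorem meuclidGrundy_eq_grossmanGrundy (a b : ℕ) (ha : 0 < a) (hab : a < b) (hnd : ¬ a ∣ b) :
    (¬ ((∀ j < (cf a b).length - 1, (cf a b).getD j 0 = (cf a b).getD 0 0) ∧
        (cf a b).getD 0 0 < (cf a b).getD ((cf a b).length - 1) 0) →
      meuclidGrundy (a, b) = grossmanGrundy (a, b)) ∧
    (((∀ j < (cf a b).length - 1, (cf a b).getD j 0 = (cf a b).getD 0 0) ∧
        (cf a b).getD 0 0 < (cf a b).getD ((cf a b).length - 1) 0) →
      (meuclidGrundy (a, b) : ℤ) = (grossmanGrundy (a, b) : ℤ) - (-1) ^ Ifun a b) := by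
  have hr : b % a ≠ 0 := fun h => hnd (Nat.dvd_of_mod_eq_zero h)
  have hlen : 2 ≤ (cf a b).length := by
    rw [cf_pos a b ha.ne', cf_pos (b % a) a hr]
    simp
  have hlen1 : 1 ≤ (cf a b).length := by omega
  have hq1 : 1 ≤ b / a := (Nat.one_le_div_iff ha).mpr hab.le
  have hG := grossman_formula (a + b) a b le_rfl ha hab.le
  have hM := meuclid_formula (a + b) a b le_rfl ha hab hnd
  constructor
  · intro hcnot
    rw [hM, hG, PM_eq_PG_of_not _ hlen hcnot]
  · intro hcond
    obtain ⟨hPG, hPM⟩ := special_PG_PM _ hlen hcond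
    have hI : Ifun a b = (cf a b).length - 1 := by
      unfold Ifun
      refine le_antisymm (Nat.findGreatest_le _) (Nat.le_findGreatest le_rfl ?_)
      exact ⟨by omega, hcond.1, le_of_lt hcond.2⟩
    rw [hM, hG, hI, hPG, hPM]
    rcases Nat.mod_two_eq_zero_or_one (cf a b).length with hp | hp
    · have hp1 : ((cf a b).length - 1) % 2 = 1 := by omega
      rw [hp, Odd.neg_one_pow (Nat.odd_iff.mpr hp1)]
      norm_num
    · have hp1 : ((cf a b).length - 1) % 2 = 0 := by omega
      rw [hp, Even.neg_one_pow (Nat.even_iff.mpr hp1)]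
      norm_num
end

section
/- Let a and b be integers with 0 < a < b such that a does not divide b, and suppose the continued fraction expansion of b/a has exactly two partial quotients, b/a = [a₀, a₁] (i.e. n = 1). Then the Sprague–Grundy value of the M-Euclid position {a,b} is 𝒢_M(a,b) = a₀ = ⌊b/a⌋. In particular, if a < b < 2a and a ∤ b, then 𝒢_M(a,b) = 1. -/
/-! When `b = q a + r` with `0 < r < a` and `r ∣ a`, the options of `{a, b}` are the positions
`{a, j a + r}` for `0 < j < q` together with the terminal position `{r, a}` (for `j = 0`).
Induction on `q` shows that `{a, j a + r}` has value `j`, so the option values of `{a, b}` are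
exactly `0, …, q - 1` and their mex is `q = ⌊b/a⌋`. A continued fraction `[a₀, a₁]` of `b/a` says
precisely that the Euclidean algorithm stops after two steps, i.e. `b mod a` is a nonzero divisor
of `a`. -/

lemma mex_Iio (n : ℕ) : mex (Set.Iio n) = n := by
  simp only [mex, Set.mem_Iio, not_lt]
  exact csInf_Ici

lemma cf_of_ne_zero {a : ℕ} (ha : a ≠ 0) (b : ℕ) : cf a b = b / a :: cf (b % a) a := by
  rw [cf, dif_neg ha]

lemma cf_eq_nil_iff {a b : ℕ} : cf a b = [] ↔ a = 0 := by
  rw [cf]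
  split_ifs with ha <;> simp [ha]

lemma length_cf_eq_one_iff {a b : ℕ} : (cf a b).length = 1 ↔ a ≠ 0 ∧ b % a = 0 := by
  by_cases ha : a = 0
  · simp [ha, cf_eq_nil_iff.mpr]
  · simp [cf_of_ne_zero ha, cf_eq_nil_iff, ha]

lemma length_cf_eq_two_iff {a b : ℕ} :
    (cf a b).length = 2 ↔ a ≠ 0 ∧ b % a ≠ 0 ∧ b % a ∣ a := by
  by_cases ha : a = 0
  · simp [ha, cf_eq_nil_iff.mpr]
  · simp [cf_of_ne_zero ha, length_cf_eq_one_iff, ha, Nat.dvd_iff_mod_eq_zero]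

lemma meuclidGrundy_eq_zero_of_dvd {p : ℕ × ℕ} (h : p.1 ∣ p.2) : meuclidGrundy p = 0 := by
  rw [meuclidGrundy, mex, Nat.sInf_eq_zero]
  left
  rintro ⟨q, ⟨-, -, hnd, -⟩, -⟩
  exact hnd h

lemma meuclidMove_mul_add_iff {a q r : ℕ} (hr : 0 < r) (hra : r < a) (hq : 0 < q)
    (p : ℕ × ℕ) :
    meuclidMove (a, q * a + r) p ↔ ∃ j < q, p = (min a (j * a + r), max a (j * a + r)) := by
  have ha : 0 < a := hr.trans hra
  constructor
  · rintro ⟨-, -, -, k, hk, hkb, rfl⟩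
    simp only at hkb ⊢
    have hkq : k < q + 1 :=
      Nat.lt_of_mul_lt_mul_right (a := a) (by rw [Nat.add_one_mul]; omega)
    have hsub : (q - k) * a = q * a - k * a := Nat.sub_mul q k a
    have hka : k * a ≤ q * a := Nat.mul_le_mul_right a (by omega)
    exact ⟨q - k, by omega, by rw [show q * a + r - k * a = (q - k) * a + r by omega]⟩
  · rintro ⟨j, hjq, rfl⟩
    have hsub : (q - j) * a = q * a - j * a := Nat.sub_mul q j a
    have hja : j * a < q * a := Nat.mul_lt_mul_of_pos_right hjq ha
    have hqa : a ≤ q * a := Nat.le_mul_of_pos_left a hq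
    have hnd : ¬ a ∣ q * a + r := fun h =>
      absurd (Nat.le_of_dvd hr ((Nat.dvd_add_right (dvd_mul_left a q)).mp h)) (by omega)
    refine ⟨ha, by omega, hnd, q - j, by omega, show (q - j) * a < q * a + r by omega, ?_⟩
    simp only
    rw [show q * a + r - (q - j) * a = j * a + r by omega]

theorem meuclidGrundy_min_max_mul_add {a r : ℕ} (hr : 0 < r) (hra : r < a) (hdvd : r ∣ a)
    (q : ℕ) : meuclidGrundy (min a (q * a + r), max a (q * a + r)) = q := by
  induction q using Nat.strong_induction_on with
  | _ q ih =>
    rcases Nat.eq_zero_or_pos q with rfl | hq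
    · simpa [hra.le] using meuclidGrundy_eq_zero_of_dvd (p := (r, a)) hdvd
    have hqa : a ≤ q * a := Nat.le_mul_of_pos_left a hq
    rw [min_eq_left (by omega), max_eq_right (by omega), meuclidGrundy]
    suffices h : {g | ∃ p, ∃ _ : meuclidMove (a, q * a + r) p, meuclidGrundy p = g} = Set.Iio q by
      rw [h, mex_Iio]
    ext g
    simp only [meuclidMove_mul_add_iff hr hra hq, Set.mem_ofPred_eq, Set.mem_Iio]
    constructor
    · rintro ⟨p, ⟨j, hjq, rfl⟩, rfl⟩
      rwa [ih j hjq]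
    · exact fun hg => ⟨_, ⟨g, hg, rfl⟩, ih g hg⟩

theorem meuclidGrundy_eq_div {a b : ℕ} (ha : 0 < a) (hab : a ≤ b) (hr : 0 < b % a)
    (hdvd : b % a ∣ a) : meuclidGrundy (a, b) = b / a := by
  have h := meuclidGrundy_min_max_mul_add hr (Nat.mod_lt b ha) hdvd (b / a)
  rwa [Nat.div_add_mod', min_eq_left hab, max_eq_right hab] at h

theorem meuclidGrundy_of_length_two_general (a b : ℕ) (hab : a < b)
    (hn : (cf a b).length = 2) :
    meuclidGrundy (a, b) = (cf a b).getD 0 0 ∧ (cf a b).getD 0 0 = b / a ∧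
      (b < 2 * a → meuclidGrundy (a, b) = 1) := by
  obtain ⟨ha, hr, hdvd⟩ := length_cf_eq_two_iff.mp hn
  have hG := meuclidGrundy_eq_div (Nat.pos_of_ne_zero ha) hab.le (Nat.pos_of_ne_zero hr) hdvd
  have hhead : (cf a b).getD 0 0 = b / a := by rw [cf_of_ne_zero ha]; rfl
  refine ⟨hG.trans hhead.symm, hhead, fun hb => ?_⟩
  rw [hG, Nat.div_eq_of_lt_le (k := 1) (by omega) (by omega)]

/-- **Base case `n = 1` of Theorem 2.**  If `0 < a < b`, `a ∤ b`, and the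
continued fraction expansion of `b/a` is `[a₀, a₁]` (i.e. it has exactly two
partial quotients), then `𝒢_M(a,b) = a₀ = ⌊b/a⌋`; in particular if moreover
`a < b < 2a` then `𝒢_M(a,b) = 1`. -/
theorem meuclidGrundy_of_length_two (a b : ℕ) (ha : 0 < a) (hab : a < b) (hnd : ¬ a ∣ b)
    (hn : (cf a b).length = 2) :
    meuclidGrundy (a, b) = (cf a b).getD 0 0 ∧ (cf a b).getD 0 0 = b / a ∧
      (b < 2 * a → meuclidGrundy (a, b) = 1) :=
  meuclidGrundy_of_length_two_general a b hab hn
end
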